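/- arXiv:1310.7558 — 5 statements merged into one kernel-verified Lean document; each statement's English description precedes it below -/
import Mathlib

section
/- Let X be a compact path-connected subset of the plane and let 𝒴 be a finite family of compact path-connected subsets of the plane such that {X} ∪ 𝒴 is simple and the sets Y ∩ X for Y ∈ 𝒴 are pairwise disjoint. Then for any two distinct points x₁, x₂ ∈ X there is an arc A ⊆ X between x₁ and x₂ such that {A} ∪ 𝒴 is simple. -/
open Set

noncomputable section

/-- The closed upper halfplane. -/
def UpperHalf : Set (ℝ × ℝ) := {p | 0 ≤ p.2}

/-- The baseline `ℝ × {0}`. -/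
def Baseline : Set (ℝ × ℝ) := {p | p.2 = 0}

/-- The base of a set: its intersection with the baseline. -/
def base (X : Set (ℝ × ℝ)) : Set (ℝ × ℝ) := X ∩ Baseline

/-- `A` is an arc between `x` and `y`: the image of a continuous injective map on `[0,1]`. -/
def IsArcBetween (A : Set (ℝ × ℝ)) (x y : ℝ × ℝ) : Prop :=
  ∃ φ : ℝ → ℝ × ℝ, ContinuousOn φ (Icc 0 1) ∧ InjOn φ (Icc 0 1) ∧
    φ 0 = x ∧ φ 1 = y ∧ A = φ '' Icc 0 1

/-- A family of sets is simple if the intersection of every nonempty subfamily is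
empty or path-connected. -/
def IsSimpleFamily (F : Set (Set (ℝ × ℝ))) : Prop :=
  ∀ G ⊆ F, G.Nonempty → ⋂₀ G = ∅ ∨ IsPathConnected (⋂₀ G)

/-- A grounded set: a compact path-connected subset of the upper halfplane whose base
is a nonempty segment of the baseline. -/
def Grounded (X : Set (ℝ × ℝ)) : Prop :=
  X ⊆ UpperHalf ∧ IsCompact X ∧ IsPathConnected X ∧
    ∃ a b : ℝ, a ≤ b ∧ base X = Icc a b ×ˢ ({0} : Set ℝ)

/-- A grounded family: a finite simple family of grounded sets with pairwise disjoint bases. -/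
def GroundedFamily (F : Set (Set (ℝ × ℝ))) : Prop :=
  F.Finite ∧ (∀ X ∈ F, Grounded X) ∧ IsSimpleFamily F ∧
    F.Pairwise fun X Y => Disjoint (base X) (base Y)

/-- The intersection graph of `F` is properly colorable with `n` colors. -/
def FamColorable (F : Set (Set (ℝ × ℝ))) (n : ℕ) : Prop :=
  ∃ c : Set (ℝ × ℝ) → ℕ, (∀ X ∈ F, c X < n) ∧
    ∀ X ∈ F, ∀ Y ∈ F, X ≠ Y → (X ∩ Y).Nonempty → c X ≠ c Y

/-- The clique number of the intersection graph of `F` is at most `k`. -/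
def CliqueBdd (F : Set (Set (ℝ × ℝ))) (k : ℕ) : Prop :=
  ∀ G ⊆ F, (G.Pairwise fun X Y => (X ∩ Y).Nonempty) → G.ncard ≤ k

/-- `X ≺ Y` : the base of `X` lies entirely to the left of the base of `Y`. -/
def Before (X Y : Set (ℝ × ℝ)) : Prop :=
  ∀ p ∈ base X, ∀ q ∈ base Y, p.1 < q.1

/-- The exterior of `X`: the unique unbounded path-connected component of
`UpperHalf \ X` (described as the set of points of `UpperHalf \ X` whose
path component therein is unbounded). -/
def extSet (X : Set (ℝ × ℝ)) : Set (ℝ × ℝ) :=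
  {p | p ∈ UpperHalf \ X ∧ ¬ Bornology.IsBounded (pathComponentIn (UpperHalf \ X) p)}

/-- `X` is surrounded by `S` if it is disjoint from `S ∪ ext(S)`. -/
def SurroundedBy (X S : Set (ℝ × ℝ)) : Prop :=
  Disjoint X (S ∪ extSet S)

/-- `cut R S`: the closure of the path-connected component of `R \ S` containing `base R`. -/
def cut (R S : Set (ℝ × ℝ)) : Set (ℝ × ℝ) :=
  closure (⋃ x ∈ base R, pathComponentIn (R \ S) x)

/-- `C` is a path-connected component of `U`. -/
def IsPathComponentOf (C U : Set (ℝ × ℝ)) : Prop :=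
  ∃ p ∈ U, C = pathComponentIn U p

/-- The closed region enclosed by a Jordan curve `C`: the union of `C` with all points
whose path component in the complement of `C` is bounded. -/
def JordanRegion (C : Set (ℝ × ℝ)) : Set (ℝ × ℝ) :=
  C ∪ {x | x ∉ C ∧ Bornology.IsBounded (pathComponentIn Cᶜ x)}

/-- `L` is a line in the plane. -/
def IsLine (L : Set (ℝ × ℝ)) : Prop :=
  ∃ a d : ℝ × ℝ, d ≠ 0 ∧ L = {p | ∃ t : ℝ, p = a + t • d}

/-- `x` is a neighbor of `R i` (within region `J`, among `R 0, …, R (m-1)`). -/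
def Nbr (J : Set (ℝ × ℝ)) (m : ℕ) (R : ℕ → Set (ℝ × ℝ)) (i : ℕ) (x : ℝ × ℝ) : Prop :=
  x ∈ J ∧ ∃ A y, y ∈ R i ∧ A ⊆ J ∧ IsArcBetween A x y ∧ ∀ j < m, j ≠ i → Disjoint A (R j)

/-- `Iset J m R i`: the points of `J` that are neighbors of both `R i` and `R (i+1)`. -/
def Iset (J : Set (ℝ × ℝ)) (m : ℕ) (R : ℕ → Set (ℝ × ℝ)) (i : ℕ) : Set (ℝ × ℝ) :=
  {x | Nbr J m R i x ∧ Nbr J m R (i + 1) x}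

/-- The alternating sequence `R 0, I 0, R 1, I 1, …, R (m-1)` (0-based). -/
def seqRI (R I : ℕ → Set (ℝ × ℝ)) (n : ℕ) : Set (ℝ × ℝ) :=
  if n % 2 = 0 then R (n / 2) else I (n / 2)

end

/-!
Join `x₁` to `x₂` by a path in `X`. For each `Y ∈ 𝒴` in turn, replace the stretch of the path
between its first and last visits to `Y` by a path inside `X ∩ Y`, which is empty or
path-connected since `{X} ∪ 𝒴` is simple. Afterwards the path meets `Y` in an interval of parameters, and because the
traces `Y ∩ X` are pairwise disjoint, later replacements keep the earlier traces intervals.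
A monotone reparametrization then makes the path injective, still with interval traces. The
resulting arc `A` meets each `Y` in the image of an interval, hence in an empty or path-connected
set, and meets any two members of `𝒴` in the empty set.

The injective reparametrization exists in any Hausdorff space. By Zorn there is a minimal closed
`K ⊆ [0, 1]` containing `0` and `1` such that the path takes equal values at the two ends of each
gap of `K`; following the path along `K` only removes loops and leaves a path whose fibers are
intervals. Ordered along `[0, 1]`, these fibers are collapsed onto `[0, 1]` by a monotone map built
from an order isomorphism between the fibers through rational points and `ℚ ∩ (0, 1)`.
-/

open Filter Topology

noncomputable section

/-- Extending `f` by slope-one lines outside `[a, b]` gives a monotone function on `ℝ` with dense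
range, which is therefore continuous. -/
lemma MonotoneOn.continuousOn_Icc_of_exists_between {f : ℝ → ℝ} {a b : ℝ} (hab : a ≤ b)
    (hf : MonotoneOn f (Icc a b))
    (hdense : ∀ x y, f a ≤ x → x < y → y ≤ f b → ∃ t ∈ Icc a b, f t ∈ Ioo x y) :
    ContinuousOn f (Icc a b) := by
  set c : ℝ → ℝ := fun t => projIcc a b hab t
  set F : ℝ → ℝ := fun t => f (c t) + (t - c t)
  have hF : Monotone F := by
    intro s t hst
    have hc : c s ≤ c t := monotone_projIcc hab hst
    have hlip : c t - c s ≤ t - s := by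
      have := abs_projIcc_sub_projIcc (c := t) (d := s) hab
      rw [abs_of_nonneg (sub_nonneg.2 hc), abs_of_nonneg (sub_nonneg.2 hst)] at this
      exact this
    have := hf (projIcc a b hab s).2 (projIcc a b hab t).2 hc
    simp only [F]
    linarith
  have hFa : ∀ t ≤ a, F t = f a + (t - a) := fun t ht => by simp [F, c, projIcc_of_le_left hab ht]
  have hFb : ∀ t, b ≤ t → F t = f b + (t - b) := fun t ht => by
    simp [F, c, projIcc_of_right_le hab ht]
  have hFf : EqOn F f (Icc a b) := fun t ht => by simp [F, c, projIcc_of_mem hab ht]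
  have hdenseF : DenseRange F := by
    refine dense_iff_exists_between.2 fun x y hxy => ?_
    by_cases hxa : x < f a
    · obtain ⟨v, hxv, hv⟩ := exists_between (lt_min hxy hxa)
      refine ⟨_, ⟨v - f a + a, hFa _ (by linarith [min_le_right y (f a)])⟩, ?_⟩
      constructor <;> linarith [min_le_left y (f a)]
    by_cases hby : f b < y
    · obtain ⟨v, hv, hvy⟩ := exists_between (max_lt hxy hby)
      refine ⟨_, ⟨v - f b + b, hFb _ (by linarith [le_max_right x (f b)])⟩, ?_⟩
      constructor <;> linarith [le_max_left x (f b)]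
    obtain ⟨t, ht, hft⟩ := hdense x y (not_lt.1 hxa) hxy (not_lt.1 hby)
    exact ⟨_, ⟨t, hFf ht⟩, hft⟩
  exact (hF.continuous_of_denseRange hdenseF).continuousOn.congr hFf.symm

lemma exists_strictMono_range_eq_rat_Ioo (α : Type*) [LinearOrder α] [Countable α]
    [DenselyOrdered α] [NoMinOrder α] [NoMaxOrder α] [Nonempty α] :
    ∃ σ : α → ℝ, StrictMono σ ∧ range σ = ((↑) : ℚ → ℝ) '' Ioo 0 1 := by
  have : Nonempty (Ioo (0 : ℚ) 1) := ⟨⟨1 / 2, by norm_num, by norm_num⟩⟩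
  obtain ⟨θ⟩ := Order.iso_of_countable_dense α (Ioo (0 : ℚ) 1)
  refine ⟨fun x => ((θ x : ℚ) : ℝ), fun x y h => Rat.cast_lt.2 (θ.strictMono h), ?_⟩
  ext y
  refine ⟨fun ⟨x, hx⟩ => ⟨θ x, (θ x).2, hx⟩, fun ⟨p, hp, hpy⟩ => ⟨θ.symm ⟨p, hp⟩, ?_⟩⟩
  simp [hpy]

section RangeRat

variable {α : Type*} {σ : α → ℝ} (hσr : range σ = ((↑) : ℚ → ℝ) '' Ioo 0 1)
include hσr

lemma mem_Ioo_of_range_eq (a : α) : σ a ∈ Ioo 0 1 := by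
  obtain ⟨p, hp, hpa⟩ := hσr ▸ mem_range_self a
  rw [← hpa]
  exact ⟨by exact_mod_cast hp.1, by exact_mod_cast hp.2⟩

lemma exists_mem_Ioo_of_range_eq {x y : ℝ} (hx : 0 ≤ x) (hxy : x < y) (hy : y ≤ 1) :
    ∃ a, σ a ∈ Ioo x y := by
  obtain ⟨p, hxp, hpy⟩ := exists_rat_btwn hxy
  obtain ⟨a, ha⟩ : (p : ℝ) ∈ range σ := hσr ▸ ⟨p, ⟨by exact_mod_cast hx.trans_lt hxp,
    by exact_mod_cast hpy.trans_le hy⟩, rfl⟩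
  exact ⟨a, ha ▸ ⟨hxp, hpy⟩⟩

end RangeRat

lemma Set.OrdConnected.sdiff_Icc {s : Set ℝ} (hs : s.OrdConnected) {a : ℝ} (ha : a ∉ s) (b : ℝ) :
    (s \ Icc a b).OrdConnected := by
  refine ⟨fun x hx y hy z hz => ⟨hs.out hx.1 hy.1 hz, fun hzab => ?_⟩⟩
  have hxa : x < a := not_le.1 fun h => hx.2 ⟨h, hz.1.trans hzab.2⟩
  exact ha (hs.out hx.1 hy.1 ⟨hxa.le, hzab.1.trans hz.2⟩)

lemma Set.OrdConnected.inter_preimage_comp {E : Type*} {f : ℝ → E} {m : ℝ → ℝ} {s : Set ℝ}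
    {Y : Set E} (hs : s.OrdConnected) (h : (s ∩ f ⁻¹' Y).OrdConnected) (hm : MonotoneOn m s)
    (hms : MapsTo m s s) : (s ∩ (f ∘ m) ⁻¹' Y).OrdConnected := by
  obtain ⟨u, hu, hequ⟩ := h.preimage_monotoneOn hm
  have : s ∩ (f ∘ m) ⁻¹' Y = s ∩ m ⁻¹' (s ∩ f ⁻¹' Y) :=
    ext fun t => ⟨fun ⟨ht, hY⟩ => ⟨ht, hms ht, hY⟩, fun ⟨ht, _, hY⟩ => ⟨ht, hY⟩⟩
  rw [this, hequ]
  exact hs.inter hu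

section CollapsingLoops

variable {E : Type*}

def lastBefore (K : Set ℝ) (t : ℝ) : ℝ := sSup (K ∩ Iic t)

def firstAfter (K : Set ℝ) (t : ℝ) : ℝ := sInf (K ∩ Ici t)

lemma lastBefore_congr {K : Set ℝ} {t u : ℝ} (h : Disjoint K (uIcc t u)) :
    lastBefore K u = lastBefore K t := by
  refine congrArg sSup (ext fun k => and_congr_right fun hk => ⟨fun hku => ?_, fun hkt => ?_⟩)
  · exact not_lt.1 fun htk => h.notMem_of_mem_left hk (mem_uIcc.2 (Or.inl ⟨htk.le, hku⟩))
  · exact not_lt.1 fun huk => h.notMem_of_mem_left hk (mem_uIcc.2 (Or.inr ⟨huk.le, hkt⟩))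

structure CollapsesGaps (f : ℝ → E) (K : Set ℝ) : Prop where
  isClosed : IsClosed K
  subset_Icc : K ⊆ Icc 0 1
  zero_mem : (0 : ℝ) ∈ K
  one_mem : (1 : ℝ) ∈ K
  apply_eq_of_gap : ∀ a ∈ K, ∀ b ∈ K, a < b → Disjoint K (Ioo a b) → f a = f b

lemma collapsesGaps_Icc (f : ℝ → E) : CollapsesGaps f (Icc 0 1) where
  isClosed := isClosed_Icc
  subset_Icc := subset_rfl
  zero_mem := left_mem_Icc.2 zero_le_one
  one_mem := right_mem_Icc.2 zero_le_one
  apply_eq_of_gap a ha b hb hab hgap := by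
    obtain ⟨c, hac, hcb⟩ := exists_between hab
    exact (hgap.notMem_of_mem_right ⟨hac, hcb⟩ ⟨ha.1.trans hac.le, hcb.le.trans hb.2⟩).elim

namespace CollapsesGaps

variable {f : ℝ → E} {K : Set ℝ}

lemma isCompact (hK : CollapsesGaps f K) : IsCompact K :=
  isCompact_Icc.of_isClosed_subset hK.isClosed hK.subset_Icc

lemma inter_Icc_nonempty (hK : CollapsesGaps f K) {x y u v : ℝ} (hx : x ∈ K) (hy : y ∈ K)
    (hxu : x ≤ u) (huv : u < v) (hvy : v ≤ y) (hne : ∀ a ∈ Icc x u, ∀ b ∈ Icc v y, f a ≠ f b) :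
    (K ∩ Icc u v).Nonempty := by
  by_contra hemp
  have ha := (hK.isCompact.inter_right isClosed_Icc).sSup_mem ⟨x, hx, le_rfl, hxu⟩
  have hb := (hK.isCompact.inter_right isClosed_Icc).sInf_mem ⟨y, hy, hvy, le_rfl⟩
  refine hne _ ha.2 _ hb.2 (hK.apply_eq_of_gap _ ha.1 _ hb.1
    (ha.2.2.trans_lt (huv.trans_le hb.2.1)) (disjoint_left.2 fun k hk ⟨hak, hkb⟩ => ?_))
  rcases le_or_gt k u with hku | huk
  · exact hak.not_ge
      (le_csSup (bddAbove_Icc.mono inter_subset_right) ⟨hk, ha.2.1.trans hak.le, hku⟩)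
  rcases le_or_gt v k with hvk | hkv
  · exact hkb.not_ge
      (csInf_le (bddBelow_Icc.mono inter_subset_right) ⟨hk, hvk, hkb.le.trans hb.2.2⟩)
  · exact hemp ⟨k, hk, huk.le, hkv.le⟩

/-- If `f a ≠ f b` across a gap `(a, b)` of `⋂₀ c`, every member of `c` must meet a fixed compact
subinterval `[a + δ, b - δ]` (otherwise it has a gap with ends near `a` and `b`), so `⋂₀ c` meets
it too. -/
lemma sInter [TopologicalSpace E] [T2Space E] (hf : Continuous f) {c : Set (Set ℝ)}
    (hc : IsChain (· ⊆ ·) c) (hne : c.Nonempty) (hcK : ∀ K ∈ c, CollapsesGaps f K) :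
    CollapsesGaps f (⋂₀ c) := by
  obtain ⟨K₀, hK₀⟩ := hne
  refine ⟨isClosed_sInter fun K hK => (hcK K hK).isClosed,
    (sInter_subset_of_mem hK₀).trans (hcK K₀ hK₀).subset_Icc,
    mem_sInter.2 fun K hK => (hcK K hK).zero_mem, mem_sInter.2 fun K hK => (hcK K hK).one_mem, ?_⟩
  intro a ha b hb hab hgap
  by_contra hne
  obtain ⟨U, V, hU, hV, haU, hbV, hUV⟩ := t2_separation hne
  obtain ⟨δa, hδa₀, hba⟩ := Metric.isOpen_iff.1 (hU.preimage hf) a haU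
  obtain ⟨δb, hδb₀, hbb⟩ := Metric.isOpen_iff.1 (hV.preimage hf) b hbV
  obtain ⟨δ, hδ, hδa, hδb, hδab⟩ : ∃ δ > 0, δ < δa ∧ δ < δb ∧ 3 * δ ≤ b - a := by
    refine ⟨min (min δa δb) (b - a) / 3, by positivity, ?_, ?_, ?_⟩ <;>
      linarith [min_le_left (min δa δb) (b - a), min_le_right (min δa δb) (b - a),
        min_le_left δa δb, min_le_right δa δb, lt_min (lt_min hδa₀ hδb₀) (sub_pos.2 hab)]
  have hmeet : ∀ K ∈ c, (K ∩ Icc (a + δ) (b - δ)).Nonempty := fun K hK =>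
    (hcK K hK).inter_Icc_nonempty (mem_sInter.1 ha K hK) (mem_sInter.1 hb K hK) (by linarith)
      (by linarith) (by linarith) fun a' ha' b' hb' => hUV.ne_of_mem
      (hba (by rw [Metric.mem_ball, Real.dist_eq, abs_lt]; constructor <;> linarith [ha'.1, ha'.2]))
      (hbb (by rw [Metric.mem_ball, Real.dist_eq, abs_lt]; constructor <;> linarith [hb'.1, hb'.2]))
  have : Nonempty ((fun K => K ∩ Icc (a + δ) (b - δ)) '' c) := ⟨⟨_, K₀, hK₀, rfl⟩⟩
  have hdir : DirectedOn (· ⊇ ·) ((fun K => K ∩ Icc (a + δ) (b - δ)) '' c) := by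
    rintro _ ⟨K, hK, rfl⟩ _ ⟨K', hK', rfl⟩
    rcases hc.total hK hK' with h | h
    · exact ⟨_, ⟨K, hK, rfl⟩, subset_rfl, inter_subset_inter_left _ h⟩
    · exact ⟨_, ⟨K', hK', rfl⟩, inter_subset_inter_left _ h, subset_rfl⟩
  obtain ⟨k, hk⟩ := IsCompact.nonempty_sInter_of_directed_nonempty_isCompact_isClosed hdir
    (by rintro _ ⟨K, hK, rfl⟩; exact hmeet K hK)
    (by rintro _ ⟨K, hK, rfl⟩; exact (hcK K hK).isCompact.inter_right isClosed_Icc)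
    (by rintro _ ⟨K, hK, rfl⟩; exact (hcK K hK).isClosed.inter isClosed_Icc)
  have hkK : k ∈ ⋂₀ c := mem_sInter.2 fun K hK => (mem_sInter.1 hk _ ⟨K, hK, rfl⟩).1
  have hkI := (mem_sInter.1 hk _ ⟨K₀, hK₀, rfl⟩).2
  exact hgap.notMem_of_mem_left hkK ⟨by linarith [hkI.1], by linarith [hkI.2]⟩

/-- A gap of `K \ (a, b)` that meets `K` must be `(a, b)` itself. -/
lemma diff_Ioo (hK : CollapsesGaps f K) {a b : ℝ} (ha : a ∈ K) (hb : b ∈ K) (hab : f a = f b) :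
    CollapsesGaps f (K \ Ioo a b) where
  isClosed := hK.isClosed.sdiff isOpen_Ioo
  subset_Icc := sdiff_subset.trans hK.subset_Icc
  zero_mem := ⟨hK.zero_mem, fun h => h.1.not_ge (hK.subset_Icc ha).1⟩
  one_mem := ⟨hK.one_mem, fun h => h.2.not_ge (hK.subset_Icc hb).2⟩
  apply_eq_of_gap a' ha' b' hb' hab' hgap := by
    by_cases hgapK : Disjoint K (Ioo a' b')
    · exact hK.apply_eq_of_gap a' ha'.1 b' hb'.1 hab' hgapK
    obtain ⟨k, hk, hk'⟩ := not_disjoint_iff.1 hgapK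
    have hkab : k ∈ Ioo a b := not_not.1 fun h => hgap.notMem_of_mem_left ⟨hk, h⟩ hk'
    have ha'a : a' ≤ a := not_lt.1 fun h => ha'.2 ⟨h, hk'.1.trans hkab.2⟩
    have haa' : a ≤ a' := not_lt.1 fun h =>
      hgap.notMem_of_mem_left ⟨ha, fun h' => h'.1.ne rfl⟩ ⟨h, hkab.1.trans hk'.2⟩
    have hbb' : b ≤ b' := not_lt.1 fun h => hb'.2 ⟨hkab.1.trans hk'.2, h⟩
    have hb'b : b' ≤ b := not_lt.1 fun h =>
      hgap.notMem_of_mem_left ⟨hb, fun h' => h'.2.ne rfl⟩ ⟨hk'.1.trans hkab.2, h⟩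
    rwa [le_antisymm ha'a haa', le_antisymm hb'b hbb']

lemma exists_minimal [TopologicalSpace E] [T2Space E] (hf : Continuous f) :
    ∃ K, Minimal (CollapsesGaps f) K := by
  refine zorn_superset _ fun c hcK hc => ?_
  rcases c.eq_empty_or_nonempty with rfl | hne
  · exact ⟨_, collapsesGaps_Icc f, fun _ h => h.elim⟩
  · exact ⟨_, sInter hf hc hne hcK, fun _ => sInter_subset_of_mem⟩

lemma lastBefore_mem (hK : CollapsesGaps f K) {t : ℝ} (ht : 0 ≤ t) : lastBefore K t ∈ K ∩ Iic t :=
  (hK.isCompact.inter_right isClosed_Iic).sSup_mem ⟨0, hK.zero_mem, ht⟩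

lemma le_lastBefore (hK : CollapsesGaps f K) {k t : ℝ} (hk : k ∈ K) (hkt : k ≤ t) :
    k ≤ lastBefore K t :=
  le_csSup (hK.isCompact.bddAbove.mono inter_subset_left) ⟨hk, hkt⟩

lemma lastBefore_eq (hK : CollapsesGaps f K) {t : ℝ} (ht : t ∈ K) : lastBefore K t = t :=
  le_antisymm (hK.lastBefore_mem (hK.subset_Icc ht).1).2 (hK.le_lastBefore ht le_rfl)

lemma firstAfter_mem (hK : CollapsesGaps f K) {t : ℝ} (ht : t ≤ 1) : firstAfter K t ∈ K ∩ Ici t :=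
  (hK.isCompact.inter_right isClosed_Ici).sInf_mem ⟨1, hK.one_mem, ht⟩

lemma firstAfter_le (hK : CollapsesGaps f K) {k t : ℝ} (hk : k ∈ K) (htk : t ≤ k) :
    firstAfter K t ≤ k :=
  csInf_le (hK.isCompact.bddBelow.mono inter_subset_left) ⟨hk, htk⟩

lemma firstAfter_eq (hK : CollapsesGaps f K) {t : ℝ} (ht : t ∈ K) : firstAfter K t = t :=
  le_antisymm (hK.firstAfter_le ht le_rfl) (hK.firstAfter_mem (hK.subset_Icc ht).2).2

lemma monotoneOn_lastBefore (hK : CollapsesGaps f K) : MonotoneOn (lastBefore K) (Icc 0 1) :=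
  fun _ hs _ _ hst => csSup_le_csSup (hK.isCompact.bddAbove.mono inter_subset_left)
    ⟨0, hK.zero_mem, hs.1⟩ (inter_subset_inter_right _ (Iic_subset_Iic.2 hst))

lemma apply_lastBefore_eq_firstAfter (hK : CollapsesGaps f K) {t : ℝ} (ht : t ∈ Icc 0 1) :
    f (lastBefore K t) = f (firstAfter K t) := by
  by_cases htK : t ∈ K
  · rw [hK.lastBefore_eq htK, hK.firstAfter_eq htK]
  obtain ⟨haK, hat⟩ := hK.lastBefore_mem ht.1
  obtain ⟨hbK, htb⟩ := hK.firstAfter_mem ht.2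
  refine hK.apply_eq_of_gap _ haK _ hbK ?_ (disjoint_left.2 fun k hk ⟨hak, hkb⟩ => ?_)
  · exact (hat.lt_of_ne (ne_of_mem_of_not_mem haK htK)).trans
      (htb.lt_of_ne (ne_of_mem_of_not_mem hbK htK).symm)
  rcases le_total k t with hkt | htk
  · exact hak.not_ge (hK.le_lastBefore hk hkt)
  · exact hkb.not_ge (hK.firstAfter_le hk htk)

/-- Off `K` the map `f ∘ lastBefore K` is locally constant; at a point of `K` it is continuous
from the right because `lastBefore K u ∈ [t, u]`, and from the left because it agrees with
`f ∘ firstAfter K` and `firstAfter K u ∈ [u, t]`. -/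
lemma continuousOn_comp_lastBefore [TopologicalSpace E] (hK : CollapsesGaps f K)
    (hf : Continuous f) : ContinuousOn (f ∘ lastBefore K) (Icc 0 1) := by
  intro t ht
  by_cases htK : t ∈ K
  · have hft : (f ∘ lastBefore K) t = f t := congrArg f (hK.lastBefore_eq htK)
    rw [← Icc_union_Icc_eq_Icc ht.1 ht.2]
    refine ContinuousWithinAt.union ?_ ?_
    · have hlim : Tendsto (firstAfter K) (𝓝[Icc 0 t] t) (𝓝 t) :=
        tendsto_of_tendsto_of_tendsto_of_le_of_le' (tendsto_nhdsWithin_of_tendsto_nhds tendsto_id)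
          tendsto_const_nhds
          (eventually_nhdsWithin_of_forall fun u hu => (hK.firstAfter_mem (hu.2.trans ht.2)).2)
          (eventually_nhdsWithin_of_forall fun u hu => hK.firstAfter_le htK hu.2)
      rw [ContinuousWithinAt, hft]
      refine ((hf.tendsto t).comp hlim).congr' ?_
      exact eventually_nhdsWithin_of_forall fun u hu =>
        (hK.apply_lastBefore_eq_firstAfter ⟨hu.1, hu.2.trans ht.2⟩).symm
    · have hlim : Tendsto (lastBefore K) (𝓝[Icc t 1] t) (𝓝 t) :=
        tendsto_of_tendsto_of_tendsto_of_le_of_le' tendsto_const_nhds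
          (tendsto_nhdsWithin_of_tendsto_nhds tendsto_id)
          (eventually_nhdsWithin_of_forall fun u hu => hK.le_lastBefore htK hu.1)
          (eventually_nhdsWithin_of_forall fun u hu => (hK.lastBefore_mem (ht.1.trans hu.1)).2)
      rw [ContinuousWithinAt, hft]
      exact (hf.tendsto t).comp hlim
  · obtain ⟨ε, hε, hball⟩ := Metric.isOpen_iff.1 hK.isClosed.isOpen_compl t htK
    refine (continuousAt_const (y := (f ∘ lastBefore K) t)).congr ?_ |>.continuousWithinAt
    filter_upwards [Metric.ball_mem_nhds t hε] with u hu
    rw [Metric.mem_ball, Real.dist_eq] at hu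
    refine congrArg f (lastBefore_congr (disjoint_left.2 fun k hk hk' => hball ?_ hk)).symm
    rw [Metric.mem_ball, Real.dist_eq]
    exact (abs_sub_left_of_mem_uIcc hk').trans_lt hu

/-- Removing the points of `K` strictly between `lastBefore K s` and `firstAfter K t` would give a
smaller set collapsing the gaps of `f`, so for minimal `K` none are left. -/
lemma ordConnected_fiber (hK : Minimal (CollapsesGaps f) K) (x : E) :
    (Icc 0 1 ∩ (f ∘ lastBefore K) ⁻¹' {x}).OrdConnected := by
  refine ⟨fun s hs t ht u hu => ⟨⟨hs.1.1.trans hu.1, hu.2.trans ht.1.2⟩, ?_⟩⟩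
  have hK' := hK.1
  obtain ⟨haK, has⟩ := hK'.lastBefore_mem hs.1.1
  obtain ⟨hcK, htc⟩ := hK'.firstAfter_mem ht.1.2
  have hfa : f (lastBefore K s) = x := hs.2
  have hfc : f (firstAfter K t) = x := (hK'.apply_lastBefore_eq_firstAfter ht.1).symm.trans ht.2
  have hgap : Disjoint K (Ioo (lastBefore K s) (firstAfter K t)) := by
    refine disjoint_left.2 fun k hk hk' => ?_
    exact (hK.2 (hK'.diff_Ioo haK hcK (hfa.trans hfc.symm)) sdiff_subset hk).2 hk'
  obtain ⟨hbK, hbu⟩ := hK'.lastBefore_mem (hs.1.1.trans hu.1)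
  have hab := hK'.le_lastBefore haK (has.trans hu.1)
  rcases hab.eq_or_lt with hab | hab
  · exact (congrArg f hab.symm).trans hfa
  · have hbc : firstAfter K t ≤ lastBefore K u :=
      not_lt.1 fun h => hgap.notMem_of_mem_left hbK ⟨hab, h⟩
    exact (congrArg f (le_antisymm (hbu.trans (hu.2.trans htc)) hbc)).trans hfc

lemma exists_reparam_ordConnected_fiber [TopologicalSpace E] [T2Space E] (hf : Continuous f) :
    ∃ r : ℝ → ℝ, MonotoneOn r (Icc 0 1) ∧ MapsTo r (Icc 0 1) (Icc 0 1) ∧ r 0 = 0 ∧ r 1 = 1 ∧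
      ContinuousOn (f ∘ r) (Icc 0 1) ∧ ∀ x, (Icc 0 1 ∩ (f ∘ r) ⁻¹' {x}).OrdConnected := by
  obtain ⟨K, hK⟩ := exists_minimal hf
  exact ⟨lastBefore K, hK.1.monotoneOn_lastBefore,
    fun t ht => hK.1.subset_Icc (hK.1.lastBefore_mem ht.1).1, hK.1.lastBefore_eq hK.1.zero_mem,
    hK.1.lastBefore_eq hK.1.one_mem, hK.1.continuousOn_comp_lastBefore hf, ordConnected_fiber hK⟩

end CollapsesGaps

end CollapsingLoops

/-- `m` is a section of `q`; `g ∘ m` is continuous because `q` maps the compact sets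
`[0, 1] ∩ g⁻¹ C` onto the sets `[0, 1] ∩ (g ∘ m)⁻¹ C`. -/
lemma exists_injOn_comp_of_factor {E : Type*} [TopologicalSpace E] {g : ℝ → E} {q : ℝ → ℝ}
    (hg : ContinuousOn g (Icc 0 1)) (hq : ContinuousOn q (Icc 0 1))
    (hqm : MonotoneOn q (Icc 0 1)) (hq0 : q 0 = 0) (hq1 : q 1 = 1)
    (hqg : ∀ s ∈ Icc (0 : ℝ) 1, ∀ t ∈ Icc (0 : ℝ) 1, q s = q t ↔ g s = g t) :
    ∃ m : ℝ → ℝ, MonotoneOn m (Icc 0 1) ∧ MapsTo m (Icc 0 1) (Icc 0 1) ∧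
      ContinuousOn (g ∘ m) (Icc 0 1) ∧ InjOn (g ∘ m) (Icc 0 1) ∧ g (m 0) = g 0 ∧ g (m 1) = g 1 := by
  have hsurj : ∀ y ∈ Icc (0 : ℝ) 1, ∃ t ∈ Icc (0 : ℝ) 1, q t = y := fun y hy =>
    intermediate_value_Icc zero_le_one hq (by rwa [hq0, hq1])
  set m := Function.invFunOn q (Icc 0 1)
  have hm : ∀ y ∈ Icc (0 : ℝ) 1, m y ∈ Icc 0 1 ∧ q (m y) = y := fun y hy =>
    Function.invFunOn_pos (hsurj y hy)
  have hgm : ∀ y ∈ Icc (0 : ℝ) 1, ∀ t ∈ Icc (0 : ℝ) 1, q t = y → g (m y) = g t := fun y hy t ht h =>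
    (hqg _ (hm y hy).1 t ht).1 ((hm y hy).2.trans h.symm)
  refine ⟨m, fun y hy y' hy' hyy' => ?_, fun y hy => (hm y hy).1, ?_, fun y hy y' hy' h => ?_,
    hgm 0 (left_mem_Icc.2 zero_le_one) 0 (left_mem_Icc.2 zero_le_one) hq0,
    hgm 1 (right_mem_Icc.2 zero_le_one) 1 (right_mem_Icc.2 zero_le_one) hq1⟩
  · by_contra hlt
    have := hqm (hm y' hy').1 (hm y hy).1 (not_le.1 hlt).le
    rw [(hm y hy).2, (hm y' hy').2] at this
    exact hlt (le_of_eq (congrArg m (le_antisymm hyy' this)))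
  · refine continuousOn_iff_isClosed.2 fun C hC => ⟨q '' (Icc 0 1 ∩ g ⁻¹' C), ?_, ?_⟩
    · exact (isCompact_Icc.of_isClosed_subset (hg.preimage_isClosed_of_isClosed isClosed_Icc hC)
        inter_subset_left |>.image_of_continuousOn (hq.mono inter_subset_left)).isClosed
    · ext y
      refine ⟨fun ⟨hyC, hy⟩ => ⟨⟨m y, ⟨(hm y hy).1, hyC⟩, (hm y hy).2⟩, hy⟩, ?_⟩
      rintro ⟨⟨t, ⟨ht, htC⟩, rfl⟩, hy⟩
      exact ⟨show g (m (q t)) ∈ C from hgm _ hy t ht rfl ▸ htC, hy⟩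
  · rw [← (hm y hy).2, ← (hm y' hy').2]
    exact (hqg _ (hm y hy).1 _ (hm y' hy').1).2 h

section FiberOrder

variable {E : Type*} {g : ℝ → E}

def FiberLT (g : ℝ → E) (s t : ℝ) : Prop := s < t ∧ g s ≠ g t

def fiberMin (g : ℝ → E) (t : ℝ) : ℝ := sInf (Icc 0 1 ∩ g ⁻¹' {g t})

def fiberReps (g : ℝ → E) : Set ℝ :=
  {d | ∃ r : ℚ, (r : ℝ) ∈ Icc 0 1 ∧ FiberLT g 0 r ∧ FiberLT g r 1 ∧ fiberMin g r = d}

lemma fiberMin_congr {s t : ℝ} (h : g s = g t) : fiberMin g s = fiberMin g t := by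
  rw [fiberMin, fiberMin, h]

lemma isCompact_fiber [TopologicalSpace E] [T1Space E] (hg : ContinuousOn g (Icc 0 1)) (x : E) :
    IsCompact (Icc 0 1 ∩ g ⁻¹' {x}) :=
  isCompact_Icc.of_isClosed_subset (hg.preimage_isClosed_of_isClosed isClosed_Icc
    isClosed_singleton) inter_subset_left

lemma fiberMin_mem [TopologicalSpace E] [T1Space E] (hg : ContinuousOn g (Icc 0 1)) {t : ℝ}
    (ht : t ∈ Icc (0 : ℝ) 1) : fiberMin g t ∈ Icc 0 1 ∩ g ⁻¹' {g t} :=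
  (isCompact_fiber hg _).sInf_mem ⟨t, ht, rfl⟩

lemma countable_fiberReps : (fiberReps g).Countable :=
  (countable_range fun r : ℚ => fiberMin g r).mono (by rintro _ ⟨r, -, -, -, rfl⟩; exact ⟨r, rfl⟩)

-- Junk value: `sSup ∅ = 0`, so the rank vanishes on the fiber of `0`.
def fiberRank (g : ℝ → E) (σ : fiberReps g → ℝ) (t : ℝ) : ℝ := sSup (σ '' {d | FiberLT g d t})

variable (hfib : ∀ x, (Icc 0 1 ∩ g ⁻¹' {x}).OrdConnected)
include hfib

lemma apply_eq_of_mem_Icc {s t u : ℝ} (hs : s ∈ Icc (0 : ℝ) 1) (ht : t ∈ Icc (0 : ℝ) 1)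
    (hst : g s = g t) (hu : u ∈ Icc s t) : g u = g s :=
  ((hfib (g s)).out ⟨hs, rfl⟩ ⟨ht, hst.symm⟩ hu).2

lemma FiberLT.congr {s t s' t' : ℝ} (hs : s ∈ Icc (0 : ℝ) 1) (ht : t ∈ Icc (0 : ℝ) 1)
    (hs' : s' ∈ Icc (0 : ℝ) 1) (ht' : t' ∈ Icc (0 : ℝ) 1) (h : FiberLT g s t)
    (hss' : g s' = g s) (htt' : g t' = g t) : FiberLT g s' t' := by
  refine ⟨not_le.1 fun hts => ?_, by rw [hss', htt']; exact h.2⟩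
  rcases le_or_gt s t' with hst' | hts'
  · exact h.2 ((apply_eq_of_mem_Icc hfib hs hs' hss'.symm ⟨hst', hts⟩).symm.trans htt')
  · exact h.2 (apply_eq_of_mem_Icc hfib ht' ht htt' ⟨hts'.le, h.1.le⟩ |>.trans htt')

lemma FiberLT.trans {s t u : ℝ} (hs : s ∈ Icc (0 : ℝ) 1) (hu : u ∈ Icc (0 : ℝ) 1)
    (hst : FiberLT g s t) (htu : FiberLT g t u) : FiberLT g s u :=
  ⟨hst.1.trans htu.1, fun h => hst.2 (apply_eq_of_mem_Icc hfib hs hu h ⟨hst.1.le, htu.1.le⟩).symm⟩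

lemma FiberLT.zero_left {s t : ℝ} (hs : s ∈ Icc (0 : ℝ) 1) (ht : t ∈ Icc (0 : ℝ) 1)
    (h : FiberLT g s t) : FiberLT g 0 t :=
  ⟨hs.1.trans_lt h.1, fun h0 => h.2 <|
    (apply_eq_of_mem_Icc hfib (left_mem_Icc.2 zero_le_one) ht h0 ⟨hs.1, h.1.le⟩).trans h0⟩

lemma FiberLT.one_right {s t : ℝ} (hs : s ∈ Icc (0 : ℝ) 1) (ht : t ∈ Icc (0 : ℝ) 1)
    (h : FiberLT g s t) : FiberLT g s 1 :=
  ⟨h.1.trans_le ht.2, fun h1 => h.2 <|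
    (apply_eq_of_mem_Icc hfib hs (right_mem_Icc.2 zero_le_one) h1 ⟨h.1.le, ht.2⟩).symm⟩

/-- Between two fibers lies the fiber of a rational point: take a rational strictly between the
last point of the first fiber and the first point of the second. -/
lemma FiberLT.exists_rat [TopologicalSpace E] [T1Space E] (hg : ContinuousOn g (Icc 0 1))
    {s t : ℝ} (hs : s ∈ Icc (0 : ℝ) 1) (ht : t ∈ Icc (0 : ℝ) 1) (h : FiberLT g s t) :
    ∃ r : ℚ, (r : ℝ) ∈ Icc 0 1 ∧ FiberLT g s r ∧ FiberLT g r t := by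
  have hclosed := isCompact_fiber hg
  have hb := (hclosed (g s)).sSup_mem ⟨s, hs, rfl⟩
  have ha := (hclosed (g t)).sInf_mem ⟨t, ht, rfl⟩
  have hba := (h.congr hfib hs ht hb.1 ha.1 hb.2 ha.2).1
  obtain ⟨r, hbr, hra⟩ := exists_rat_btwn hba
  refine ⟨r, ⟨hb.1.1.trans hbr.le, hra.le.trans ha.1.2⟩, ⟨?_, fun hsr => ?_⟩, ⟨?_, fun hrt => ?_⟩⟩
  · exact (le_csSup (hclosed _).bddAbove ⟨hs, rfl⟩).trans_lt hbr
  · exact hbr.not_ge (le_csSup (hclosed _).bddAbove ⟨⟨hb.1.1.trans hbr.le, hra.le.trans ha.1.2⟩,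
      hsr.symm⟩)
  · exact hra.trans_le (csInf_le (hclosed _).bddBelow ⟨ht, rfl⟩)
  · exact hra.not_ge (csInf_le (hclosed _).bddBelow ⟨⟨hb.1.1.trans hbr.le, hra.le.trans ha.1.2⟩,
      hrt⟩)

section Reps

variable [TopologicalSpace E] [T1Space E] (hg : ContinuousOn g (Icc 0 1))
include hg

lemma mem_fiberReps {d : ℝ} (hd : d ∈ fiberReps g) :
    d ∈ Icc (0 : ℝ) 1 ∧ FiberLT g 0 d ∧ FiberLT g d 1 ∧ fiberMin g d = d := by
  obtain ⟨r, hr, h0r, hr1, rfl⟩ := hd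
  obtain ⟨hd, hgd⟩ := fiberMin_mem hg hr
  have h0 := left_mem_Icc.2 (zero_le_one' ℝ)
  have h1 := right_mem_Icc.2 (zero_le_one' ℝ)
  exact ⟨hd, h0r.congr hfib h0 hr h0 hd rfl hgd, hr1.congr hfib hr h1 hd h1 hgd rfl,
    fiberMin_congr hgd⟩

lemma fiberLT_of_mem_fiberReps {d d' : ℝ} (hd : d ∈ fiberReps g) (hd' : d' ∈ fiberReps g)
    (h : d < d') : FiberLT g d d' :=
  ⟨h, fun he => h.ne <| (mem_fiberReps hfib hg hd).2.2.2.symm.trans <|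
      (fiberMin_congr he).trans (mem_fiberReps hfib hg hd').2.2.2⟩

lemma FiberLT.exists_fiberReps {s t : ℝ} (hs : s ∈ Icc (0 : ℝ) 1) (ht : t ∈ Icc (0 : ℝ) 1)
    (h : FiberLT g s t) : ∃ d ∈ fiberReps g, FiberLT g s d ∧ FiberLT g d t := by
  obtain ⟨r, hr, hsr, hrt⟩ := h.exists_rat hfib hg hs ht
  obtain ⟨hd, hgd⟩ := fiberMin_mem hg hr
  exact ⟨_, ⟨r, hr, hsr.zero_left hfib hs hr, hrt.one_right hfib hr ht, rfl⟩,
    hsr.congr hfib hs hr hs hd rfl hgd, hrt.congr hfib hr ht hd ht hgd rfl⟩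

end Reps

end FiberOrder

section FiberRank

variable {E : Type*} {g : ℝ → E} {σ : fiberReps g → ℝ}

lemma le_fiberRank (hσr : range σ = ((↑) : ℚ → ℝ) '' Ioo 0 1) {d : fiberReps g} {t : ℝ}
    (hdt : FiberLT g d t) : σ d ≤ fiberRank g σ t :=
  le_csSup ⟨1, by rintro _ ⟨e, -, rfl⟩; exact (mem_Ioo_of_range_eq hσr e).2.le⟩ ⟨d, hdt, rfl⟩

lemma fiberRank_le {t x : ℝ} (hx : 0 ≤ x) (h : ∀ d : fiberReps g, FiberLT g d t → σ d ≤ x) :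
    fiberRank g σ t ≤ x :=
  Real.sSup_le (by rintro _ ⟨d, hd, rfl⟩; exact h d hd) hx

lemma fiberRank_mem_Icc (hσr : range σ = ((↑) : ℚ → ℝ) '' Ioo 0 1) (t : ℝ) :
    fiberRank g σ t ∈ Icc 0 1 :=
  ⟨Real.sSup_nonneg (by rintro _ ⟨d, -, rfl⟩; exact (mem_Ioo_of_range_eq hσr d).1.le),
    fiberRank_le zero_le_one fun d _ => (mem_Ioo_of_range_eq hσr d).2.le⟩

variable [TopologicalSpace E] [T1Space E]
  (hfib : ∀ x, (Icc 0 1 ∩ g ⁻¹' {x}).OrdConnected) (hg : ContinuousOn g (Icc 0 1))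
include hfib hg

lemma denselyOrdered_fiberReps : DenselyOrdered (fiberReps g) := by
  refine ⟨fun ⟨d, hd⟩ ⟨d', hd'⟩ h => ?_⟩
  obtain ⟨e, he, hde, hed'⟩ := (fiberLT_of_mem_fiberReps hfib hg hd hd' h).exists_fiberReps hfib hg
    (mem_fiberReps hfib hg hd).1 (mem_fiberReps hfib hg hd').1
  exact ⟨⟨e, he⟩, hde.1, hed'.1⟩

lemma noMinOrder_fiberReps : NoMinOrder (fiberReps g) := by
  refine ⟨fun ⟨d, hd⟩ => ?_⟩
  obtain ⟨hdI, h0d, -, -⟩ := mem_fiberReps hfib hg hd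
  obtain ⟨e, he, -, hed⟩ := h0d.exists_fiberReps hfib hg (left_mem_Icc.2 zero_le_one) hdI
  exact ⟨⟨e, he⟩, hed.1⟩

lemma noMaxOrder_fiberReps : NoMaxOrder (fiberReps g) := by
  refine ⟨fun ⟨d, hd⟩ => ?_⟩
  obtain ⟨hdI, -, hd1, -⟩ := mem_fiberReps hfib hg hd
  obtain ⟨e, he, hde, -⟩ := hd1.exists_fiberReps hfib hg hdI (right_mem_Icc.2 zero_le_one)
  exact ⟨⟨e, he⟩, hde.1⟩

lemma nonempty_fiberReps (h01 : g 0 ≠ g 1) : Nonempty (fiberReps g) := by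
  obtain ⟨e, he, -⟩ := FiberLT.exists_fiberReps hfib hg (left_mem_Icc.2 zero_le_one)
    (right_mem_Icc.2 zero_le_one) ⟨zero_lt_one, h01⟩
  exact ⟨⟨e, he⟩⟩

lemma fiberRank_congr {s t : ℝ} (hs : s ∈ Icc (0 : ℝ) 1) (ht : t ∈ Icc (0 : ℝ) 1)
    (h : g s = g t) : fiberRank g σ s = fiberRank g σ t := by
  have hrep := fun d : fiberReps g => (mem_fiberReps hfib hg d.2).1
  refine congrArg (fun S => sSup (σ '' S)) (ext fun d => ⟨fun hd => ?_, fun hd => ?_⟩)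
  · exact hd.congr hfib (hrep d) hs (hrep d) ht rfl h.symm
  · exact hd.congr hfib (hrep d) ht (hrep d) hs rfl h

lemma fiberRank_zero (hσr : range σ = ((↑) : ℚ → ℝ) '' Ioo 0 1) : fiberRank g σ 0 = 0 :=
  le_antisymm (fiberRank_le le_rfl fun d hd => absurd hd.1 (mem_fiberReps hfib hg d.2).1.1.not_gt)
    (fiberRank_mem_Icc hσr 0).1

lemma fiberRank_one (hσr : range σ = ((↑) : ℚ → ℝ) '' Ioo 0 1) : fiberRank g σ 1 = 1 := by
  refine le_antisymm (fiberRank_mem_Icc hσr 1).2 (not_lt.1 fun hlt => ?_)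
  obtain ⟨e, he⟩ := exists_mem_Ioo_of_range_eq hσr (fiberRank_mem_Icc hσr 1).1 hlt le_rfl
  exact he.1.not_ge (le_fiberRank hσr (mem_fiberReps hfib hg e.2).2.2.1)

variable (hσ : StrictMono σ) (hσr : range σ = ((↑) : ℚ → ℝ) '' Ioo 0 1)
include hσ hσr

lemma fiberRank_lt {s t : ℝ} (hs : s ∈ Icc (0 : ℝ) 1) (ht : t ∈ Icc (0 : ℝ) 1)
    (h : FiberLT g s t) : fiberRank g σ s < fiberRank g σ t := by
  obtain ⟨d, hd, hsd, hdt⟩ := h.exists_fiberReps hfib hg hs ht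
  have hdI := (mem_fiberReps hfib hg hd).1
  obtain ⟨d', hd', hdd', hd't⟩ := hdt.exists_fiberReps hfib hg hdI ht
  calc fiberRank g σ s ≤ σ ⟨d, hd⟩ := fiberRank_le (mem_Ioo_of_range_eq hσr _).1.le
        fun e he => (hσ (he.trans hfib (mem_fiberReps hfib hg e.2).1 hdI hsd).1).le
    _ < σ ⟨d', hd'⟩ := hσ hdd'.1
    _ ≤ fiberRank g σ t := le_fiberRank hσr hd't

lemma fiberRank_eq_iff {s t : ℝ} (hs : s ∈ Icc (0 : ℝ) 1) (ht : t ∈ Icc (0 : ℝ) 1) :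
    fiberRank g σ s = fiberRank g σ t ↔ g s = g t := by
  refine ⟨fun h => ?_, fiberRank_congr hfib hg hs ht⟩
  by_contra hne
  rcases lt_or_gt_of_ne (fun hst : s = t => hne (hst ▸ rfl)) with hst | hts
  · exact (fiberRank_lt hfib hg hσ hσr hs ht ⟨hst, hne⟩).ne h
  · exact (fiberRank_lt hfib hg hσ hσr ht hs ⟨hts, Ne.symm hne⟩).ne' h

lemma monotoneOn_fiberRank : MonotoneOn (fiberRank g σ) (Icc 0 1) := by
  intro s hs t ht hst
  by_cases h : g s = g t
  · exact (fiberRank_congr hfib hg hs ht h).le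
  · exact (fiberRank_lt hfib hg hσ hσr hs ht ⟨hst.lt_of_ne fun e => h (e ▸ rfl), h⟩).le

lemma fiberRank_coe (d : fiberReps g) : fiberRank g σ d = σ d := by
  refine le_antisymm (fiberRank_le (mem_Ioo_of_range_eq hσr d).1.le
    fun e he => (hσ he.1).le) (not_lt.1 fun hlt => ?_)
  obtain ⟨e, he⟩ := exists_mem_Ioo_of_range_eq hσr (fiberRank_mem_Icc hσr d).1 hlt
    (mem_Ioo_of_range_eq hσr d).2.le
  have hed : e < d := hσ.lt_iff_lt.1 he.2
  exact he.1.not_ge (le_fiberRank hσr (fiberLT_of_mem_fiberReps hfib hg e.2 d.2 hed))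

lemma continuousOn_fiberRank : ContinuousOn (fiberRank g σ) (Icc 0 1) := by
  refine (monotoneOn_fiberRank hfib hg hσ hσr).continuousOn_Icc_of_exists_between zero_le_one
    fun x y hx hxy hy => ?_
  rw [fiberRank_zero hfib hg hσr] at hx
  rw [fiberRank_one hfib hg hσr] at hy
  obtain ⟨e, he⟩ := exists_mem_Ioo_of_range_eq hσr hx hxy hy
  exact ⟨e, (mem_fiberReps hfib hg e.2).1, (fiberRank_coe hfib hg hσ hσr e).symm ▸ he⟩

end FiberRank

theorem exists_injOn_comp_of_ordConnected_fiber {E : Type*} [TopologicalSpace E] [T1Space E]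
    {g : ℝ → E} (hg : ContinuousOn g (Icc 0 1)) (hfib : ∀ x, (Icc 0 1 ∩ g ⁻¹' {x}).OrdConnected)
    (h01 : g 0 ≠ g 1) :
    ∃ m : ℝ → ℝ, MonotoneOn m (Icc 0 1) ∧ MapsTo m (Icc 0 1) (Icc 0 1) ∧
      ContinuousOn (g ∘ m) (Icc 0 1) ∧ InjOn (g ∘ m) (Icc 0 1) ∧ g (m 0) = g 0 ∧ g (m 1) = g 1 := by
  have := (countable_fiberReps (g := g)).to_subtype
  have := denselyOrdered_fiberReps hfib hg
  have := noMinOrder_fiberReps hfib hg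
  have := noMaxOrder_fiberReps hfib hg
  have := nonempty_fiberReps hfib hg h01
  obtain ⟨σ, hσ, hσr⟩ := exists_strictMono_range_eq_rat_Ioo (fiberReps g)
  exact exists_injOn_comp_of_factor hg (continuousOn_fiberRank hfib hg hσ hσr)
    (monotoneOn_fiberRank hfib hg hσ hσr) (fiberRank_zero hfib hg hσr) (fiberRank_one hfib hg hσr)
    fun s hs t ht => fiberRank_eq_iff hfib hg hσ hσr hs ht

theorem exists_monotoneOn_injOn_comp {E : Type*} [TopologicalSpace E] [T2Space E] {f : ℝ → E}
    (hf : Continuous f) (h01 : f 0 ≠ f 1) :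
    ∃ m : ℝ → ℝ, MonotoneOn m (Icc 0 1) ∧ MapsTo m (Icc 0 1) (Icc 0 1) ∧
      ContinuousOn (f ∘ m) (Icc 0 1) ∧ InjOn (f ∘ m) (Icc 0 1) ∧ f (m 0) = f 0 ∧ f (m 1) = f 1 := by
  obtain ⟨r, hrm, hrI, hr0, hr1, hrc, hrfib⟩ := CollapsesGaps.exists_reparam_ordConnected_fiber hf
  obtain ⟨m, hmm, hmI, hmc, hmi, hm0, hm1⟩ :=
    exists_injOn_comp_of_ordConnected_fiber hrc hrfib (by simpa [hr0, hr1] using h01)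
  exact ⟨r ∘ m, hrm.comp hmm hmI, hrI.comp hmI, hmc, hmi, by simpa [hr0] using hm0,
    by simpa [hr1] using hm1⟩

lemma JoinedIn.exists_continuous {E : Type*} [TopologicalSpace E] {S : Set E} {x y : E}
    (h : JoinedIn S x y) {a b : ℝ} (hab : a < b) :
    ∃ γ : ℝ → E, Continuous γ ∧ γ a = x ∧ γ b = y ∧ ∀ t, γ t ∈ S := by
  obtain ⟨γ, hγ⟩ := h
  refine ⟨fun t => γ.extend ((t - a) / (b - a)),
    γ.continuous_extend.comp ((continuous_id.sub continuous_const).div_const _), by simp, ?_,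
    fun t => hγ _⟩
  simp [div_self (sub_pos.2 hab).ne']

section Splice

variable {E : Type*} {f h : ℝ → E} {a b t : ℝ}

def splice (f h : ℝ → E) (a b : ℝ) (t : ℝ) : E :=
  if t ≤ a then f t else if t ≤ b then h t else f t

lemma splice_of_mem_Icc (ha : h a = f a) (ht : t ∈ Icc a b) : splice f h a b t = h t := by
  rcases ht.1.eq_or_lt with rfl | hat
  · simp [splice, ha]
  · simp [splice, hat.not_ge, ht.2]

lemma splice_of_notMem_Ioo (hb : h b = f b) (ht : t ∉ Ioo a b) : splice f h a b t = f t := by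
  rcases le_or_gt t a with hta | hat
  · simp [splice, hta]
  · have hbt : b ≤ t := not_lt.1 fun htb => ht ⟨hat, htb⟩
    rcases hbt.eq_or_lt with rfl | hbt
    · simp [splice, hat.not_ge, hb]
    · simp [splice, hat.not_ge, hbt.not_ge]

lemma continuous_splice [TopologicalSpace E] (hf : Continuous f) (hh : Continuous h)
    (ha : h a = f a) (hb : h b = f b) (hab : a ≤ b) : Continuous (splice f h a b) :=
  Continuous.if_le hf (Continuous.if_le hh hf continuous_id continuous_const
    fun t ht => ht ▸ hb) continuous_id continuous_const fun t ht => by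
      simp only [ht, hab, if_true, ha]

lemma ordConnected_inter_preimage_splice {s : Set ℝ} {Z : Set E} (hb : h b = f b) (hab : a ≤ b)
    (hZ : ∀ t ∈ Icc a b, splice f h a b t ∉ Z) (hfZ : (s ∩ f ⁻¹' Z).OrdConnected) :
    (s ∩ splice f h a b ⁻¹' Z).OrdConnected := by
  have : s ∩ splice f h a b ⁻¹' Z = (s ∩ f ⁻¹' Z) \ Icc a b := by
    ext t
    by_cases hm : t ∈ Icc a b
    · exact ⟨fun h => absurd h.2 (hZ t hm), fun h => absurd hm h.2⟩
    · simp only [mem_inter_iff, Set.mem_sdiff, mem_preimage, hm, not_false_eq_true, and_true,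
        splice_of_notMem_Ioo hb fun h => hm (Ioo_subset_Icc_self h)]
  rw [this]
  exact hfZ.sdiff_Icc (fun ha => hZ a ⟨le_rfl, hab⟩ (by simpa [splice] using ha.2)) b

end Splice

/-- `f'` replaces the stretch of `f` between its first and last visits to `Y` by a path inside
`X ∩ Y`. -/
lemma exists_reroute {E : Type*} [TopologicalSpace E] {X Y : Set E} {f : ℝ → E}
    (hf : Continuous f) (hfX : MapsTo f (Icc 0 1) X) (hY : IsClosed Y)
    (hXY : ∀ x ∈ X ∩ Y, ∀ y ∈ X ∩ Y, JoinedIn (X ∩ Y) x y) :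
    ∃ f' : ℝ → E, Continuous f' ∧ f' 0 = f 0 ∧ f' 1 = f 1 ∧ MapsTo f' (Icc 0 1) X ∧
      (Icc 0 1 ∩ f' ⁻¹' Y).OrdConnected ∧
      ∀ Z : Set E, Disjoint (Y ∩ X) (Z ∩ X) → (Icc 0 1 ∩ f ⁻¹' Z).OrdConnected →
        (Icc 0 1 ∩ f' ⁻¹' Z).OrdConnected := by
  set T := Icc 0 1 ∩ f ⁻¹' Y
  rcases T.subsingleton_or_nontrivial with hT | hT
  · refine ⟨f, hf, rfl, rfl, hfX, ?_, fun _ _ h => h⟩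
    change T.OrdConnected
    rcases hT.eq_empty_or_singleton with hT | ⟨t, hT⟩ <;> rw [hT]
    exacts [ordConnected_empty, ordConnected_singleton]
  have hTc : IsCompact T := isCompact_Icc.inter_right (hY.preimage hf)
  set s₀ := sInf T
  set e₀ := sSup T
  have hs₀ : s₀ ∈ T := hTc.sInf_mem hT.nonempty
  have he₀ : e₀ ∈ T := hTc.sSup_mem hT.nonempty
  have hTse : ∀ t ∈ T, t ∈ Icc s₀ e₀ := fun t ht =>
    ⟨csInf_le hTc.bddBelow ht, le_csSup hTc.bddAbove ht⟩
  have hse : s₀ < e₀ := by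
    obtain ⟨x, hx, y, hy, hxy⟩ := hT
    rcases hxy.lt_or_gt with h | h
    · exact (hTse x hx).1.trans_lt (h.trans_le (hTse y hy).2)
    · exact (hTse y hy).1.trans_lt (h.trans_le (hTse x hx).2)
  obtain ⟨γ, hγ, hγs, hγe, hγXY⟩ :=
    (hXY _ ⟨hfX hs₀.1, hs₀.2⟩ _ ⟨hfX he₀.1, he₀.2⟩).exists_continuous hse
  set f' := splice f γ s₀ e₀
  have hmid : ∀ t ∈ Icc s₀ e₀, f' t ∈ X ∩ Y := fun t ht => by
    rw [show f' t = γ t from splice_of_mem_Icc hγs ht]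
    exact hγXY t
  have hout : ∀ t ∉ Ioo s₀ e₀, f' t = f t := fun t ht => splice_of_notMem_Ioo hγe ht
  have hout' : ∀ t ∉ Icc s₀ e₀, f' t = f t := fun t ht =>
    hout t fun h => ht (Ioo_subset_Icc_self h)
  refine ⟨f', continuous_splice hf hγ hγs hγe hse.le, hout 0 fun h => hs₀.1.1.not_gt h.1,
    hout 1 fun h => he₀.1.2.not_gt h.2, fun t ht => ?_, ?_, fun Z hZ hfZ => ?_⟩
  · by_cases hm : t ∈ Icc s₀ e₀
    · exact (hmid t hm).1
    · exact hout' t hm ▸ hfX ht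
  · have : Icc 0 1 ∩ f' ⁻¹' Y = Icc s₀ e₀ := by
      refine Subset.antisymm (fun t ⟨ht, htY⟩ => not_not.1 fun hm => hm (hTse t ⟨ht, ?_⟩))
        fun t ht => ⟨Icc_subset_Icc hs₀.1.1 he₀.1.2 ht, (hmid t ht).2⟩
      rwa [mem_preimage, ← hout' t hm]
    exact this ▸ ordConnected_Icc
  · exact ordConnected_inter_preimage_splice hγe hse.le (fun t ht hZt =>
      hZ.ne_of_mem ⟨(hmid t ht).2, (hmid t ht).1⟩ ⟨hZt, (hmid t ht).1⟩ rfl) hfZ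

lemma exists_path_ordConnected_traces {E : Type*} [TopologicalSpace E] {X : Set E}
    (hX : IsPathConnected X) {x₁ x₂ : E} (hx₁ : x₁ ∈ X) (hx₂ : x₂ ∈ X) {𝒴 : Set (Set E)}
    (hfin : 𝒴.Finite) (hclosed : ∀ Y ∈ 𝒴, IsClosed Y)
    (hXY : ∀ Y ∈ 𝒴, ∀ x ∈ X ∩ Y, ∀ y ∈ X ∩ Y, JoinedIn (X ∩ Y) x y)
    (hdisj : 𝒴.Pairwise fun Y Z => Disjoint (Y ∩ X) (Z ∩ X)) :
    ∃ f : ℝ → E, Continuous f ∧ f 0 = x₁ ∧ f 1 = x₂ ∧ MapsTo f (Icc 0 1) X ∧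
      ∀ Y ∈ 𝒴, (Icc 0 1 ∩ f ⁻¹' Y).OrdConnected := by
  induction 𝒴, hfin using Set.Finite.induction_on with
  | empty =>
    obtain ⟨γ, hγ⟩ := hX.joinedIn x₁ hx₁ x₂ hx₂
    exact ⟨γ.extend, γ.continuous_extend, γ.extend_zero, γ.extend_one, fun t _ => hγ _,
      fun _ h => h.elim⟩
  | @insert Y 𝒴 hY𝒴 _ ih =>
    obtain ⟨f, hf, hf0, hf1, hfX, hf𝒴⟩ := ih (fun Z hZ => hclosed Z (mem_insert_of_mem _ hZ))
      (fun Z hZ => hXY Z (mem_insert_of_mem _ hZ)) (hdisj.mono (subset_insert _ _))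
    obtain ⟨f', hf', hf'0, hf'1, hf'X, hf'Y, hf'𝒴⟩ :=
      exists_reroute hf hfX (hclosed Y (mem_insert _ _)) (hXY Y (mem_insert _ _))
    refine ⟨f', hf', hf'0.trans hf0, hf'1.trans hf1, hf'X, ?_⟩
    rintro Z (rfl | hZ)
    · exact hf'Y
    · exact hf'𝒴 Z (hdisj (mem_insert _ _) (mem_insert_of_mem _ hZ)
        (ne_of_mem_of_not_mem hZ hY𝒴).symm) (hf𝒴 Z hZ)

lemma IsSimpleFamily.insert_image {𝒴 : Set (Set (ℝ × ℝ))} (h𝒴 : IsSimpleFamily 𝒴)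
    {φ : ℝ → ℝ × ℝ} (hφ : ContinuousOn φ (Icc 0 1))
    (htrace : ∀ Y ∈ 𝒴, (Icc 0 1 ∩ φ ⁻¹' Y).OrdConnected)
    (hdisj : 𝒴.Pairwise fun Y Z => Disjoint (Y ∩ φ '' Icc 0 1) (Z ∩ φ '' Icc 0 1)) :
    IsSimpleFamily (insert (φ '' Icc 0 1) 𝒴) := by
  intro G hG hGne
  set A := φ '' Icc 0 1
  by_cases hA : A ∈ G
  swap
  · exact h𝒴 G (fun Y hY => (hG hY).resolve_left fun h => hA (h ▸ hY)) hGne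
  have hG' : G \ {A} ⊆ 𝒴 := fun Y hY => (hG hY.1).resolve_left hY.2
  rw [← insert_eq_of_mem hA, ← insert_sdiff_singleton, sInter_insert]
  rcases (G \ {A}).subsingleton_or_nontrivial with hs | ⟨Y, hY, Z, hZ, hYZ⟩
  · rcases hs.eq_empty_or_singleton with he | ⟨Y, hY⟩
    · rw [he, sInter_empty, inter_univ]
      exact Or.inr (((convex_Icc 0 1).isPathConnected (nonempty_Icc.2 zero_le_one)).image' hφ)
    · have hY𝒴 : Y ∈ 𝒴 := hG' (hY ▸ mem_singleton Y)
      rw [hY, sInter_singleton, ← image_inter_preimage]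
      rcases (Icc 0 1 ∩ φ ⁻¹' Y).eq_empty_or_nonempty with he | hne
      · exact Or.inl (by rw [he, image_empty])
      · exact Or.inr (((convex_iff_ordConnected.2 (htrace Y hY𝒴)).isPathConnected hne).image'
          (hφ.mono inter_subset_left))
  · refine Or.inl (eq_empty_of_forall_notMem fun x ⟨hxA, hx⟩ => ?_)
    exact (hdisj (hG' hY) (hG' hZ) hYZ).ne_of_mem ⟨mem_sInter.1 hx Y hY, hxA⟩
      ⟨mem_sInter.1 hx Z hZ, hxA⟩ rfl

end

theorem exists_simple_arc_general
    (X : Set (ℝ × ℝ)) (hXp : IsPathConnected X)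
    (𝒴 : Set (Set (ℝ × ℝ))) (h𝒴fin : 𝒴.Finite)
    (h𝒴 : ∀ Y ∈ 𝒴, IsCompact Y ∧ IsPathConnected Y)
    (hsimple : IsSimpleFamily (insert X 𝒴))
    (hdisj : 𝒴.Pairwise fun Y Z => Disjoint (Y ∩ X) (Z ∩ X))
    (x₁ x₂ : ℝ × ℝ) (hx₁ : x₁ ∈ X) (hx₂ : x₂ ∈ X) (hne : x₁ ≠ x₂) :
    ∃ A ⊆ X, IsArcBetween A x₁ x₂ ∧ IsSimpleFamily (insert A 𝒴) := by
  have hXY : ∀ Y ∈ 𝒴, ∀ x ∈ X ∩ Y, ∀ y ∈ X ∩ Y, JoinedIn (X ∩ Y) x y := by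
    intro Y hY x hx y hy
    have := hsimple {X, Y} (pair_subset (mem_insert _ _) (mem_insert_of_mem _ hY))
      (insert_nonempty _ _)
    rw [sInter_pair] at this
    exact (this.resolve_left (nonempty_of_mem hx).ne_empty).joinedIn x hx y hy
  obtain ⟨f, hf, hf0, hf1, hfX, hftrace⟩ := exists_path_ordConnected_traces hXp hx₁ hx₂ h𝒴fin
    (fun Y hY => (h𝒴 Y hY).1.isClosed) hXY hdisj
  obtain ⟨m, hmm, hmI, hmc, hmi, hm0, hm1⟩ :=
    exists_monotoneOn_injOn_comp hf (by rwa [hf0, hf1])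
  have hAX : (f ∘ m) '' Icc 0 1 ⊆ X := (hfX.comp hmI).image_subset
  refine ⟨_, hAX, ⟨f ∘ m, hmc, hmi, hm0.trans hf0, hm1.trans hf1, rfl⟩, ?_⟩
  refine IsSimpleFamily.insert_image (fun G hG => hsimple G (hG.trans (subset_insert _ _))) hmc
    (fun Y hY => ordConnected_Icc.inter_preimage_comp (hftrace Y hY) hmm hmI)
    (hdisj.mono' fun Y Z h => h.mono (inter_subset_inter_right _ hAX)
      (inter_subset_inter_right _ hAX))

/-- Between any two distinct points of a compact path-connected set `X` simple with
respect to a family `𝒴` with pairwise disjoint traces on `X`, there is an arc in `X`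
simple with respect to `𝒴`. -/
theorem exists_simple_arc
    (X : Set (ℝ × ℝ)) (hXc : IsCompact X) (hXp : IsPathConnected X)
    (𝒴 : Set (Set (ℝ × ℝ))) (h𝒴fin : 𝒴.Finite)
    (h𝒴 : ∀ Y ∈ 𝒴, IsCompact Y ∧ IsPathConnected Y)
    (hsimple : IsSimpleFamily (insert X 𝒴))
    (hdisj : 𝒴.Pairwise fun Y Z => Disjoint (Y ∩ X) (Z ∩ X))
    (x₁ x₂ : ℝ × ℝ) (hx₁ : x₁ ∈ X) (hx₂ : x₂ ∈ X) (hne : x₁ ≠ x₂) :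
    ∃ A ⊆ X, IsArcBetween A x₁ x₂ ∧ IsSimpleFamily (insert A 𝒴) :=
  exists_simple_arc_general X hXp 𝒴 h𝒴fin h𝒴 hsimple hdisj x₁ x₂ hx₁ hx₂ hne
end

section
/- Let F be a grounded family and let a, b ≥ 0 be integers with χ(F) > 2a(b+1). Then there is a subfamily H ⊆ F such that χ(H) > a and, for any two distinct intersecting members H₁, H₂ ∈ H with H₁ ≺ H₂, the family F(H₁,H₂) satisfies χ(F(H₁,H₂)) > b. -/
open Set

/-!
Order `F` by the left endpoints of the bases and cut it greedily from left to right into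
blocks, closing a block as soon as it stops being `b`-colorable. Every block is then
`(b+1)`-colorable and every block but the last has `χ > b`. Split `F` into `2(b+1)` classes by
the parity of the block and the colour inside the block. Two intersecting members of one class
lie in different blocks of equal parity, so a whole block separates them and the subfamily
between them has `χ > b`. Since `χ(F) > 2a(b+1)`, one class has `χ > a`.
-/

namespace FamColorable

variable {F G : Set (Set (ℝ × ℝ))} {m n : ℕ}

theorem subset (h : FamColorable G n) (hFG : F ⊆ G) : FamColorable F n := by
  obtain ⟨c, hlt, hne⟩ := h
  exact ⟨c, fun X hX => hlt X (hFG hX), fun X hX Y hY => hne X (hFG hX) Y (hFG hY)⟩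

theorem mono (h : FamColorable F m) (hmn : m ≤ n) : FamColorable F n := by
  obtain ⟨c, hlt, hne⟩ := h
  exact ⟨c, fun X hX => (hlt X hX).trans_le hmn, hne⟩

theorem of_subset_empty (hF : F ⊆ ∅) (n : ℕ) : FamColorable F n :=
  ⟨fun _ => 0, fun _ hX => (hF hX).elim, fun _ hX => (hF hX).elim⟩

theorem insert (h : FamColorable F n) (M : Set (ℝ × ℝ)) : FamColorable (insert M F) (n + 1) := by
  classical
  obtain ⟨c, hlt, hne⟩ := h
  refine ⟨fun X => if X = M then n else c X, fun X hX => ?_, fun X hX Y hY hXY hint => ?_⟩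
  · dsimp only
    split_ifs with hXM
    · exact n.lt_succ_self
    · exact (hlt X (hX.resolve_left hXM)).trans n.lt_succ_self
  · dsimp only
    split_ifs with hXM hYM hYM
    · exact (hXY (hXM.trans hYM.symm)).elim
    · exact (hlt Y (hY.resolve_left hYM)).ne'
    · exact (hlt X (hX.resolve_left hXM)).ne
    · exact hne X (hX.resolve_left hXM) Y (hY.resolve_left hYM) hXY hint

theorem of_fibers (cls : Set (ℝ × ℝ) → ℕ) {N a : ℕ} (hcls : ∀ X ∈ F, cls X < N)
    (hfib : ∀ i, FamColorable {X ∈ F | cls X = i} a) : FamColorable F (a * N) := by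
  choose c hlt hne using hfib
  refine ⟨fun X => cls X + N * c (cls X) X, fun X hX => ?_, fun X hX Y hY hXY hint => ?_⟩
  · have hc : c (cls X) X + 1 ≤ a := hlt _ X ⟨hX, rfl⟩
    have := hcls X hX
    nlinarith
  · dsimp only
    intro heq
    have hcls_eq : cls X = cls Y := by
      simpa only [Nat.add_mul_mod_self_left, Nat.mod_eq_of_lt (hcls X hX),
        Nat.mod_eq_of_lt (hcls Y hY)] using congrArg (· % N) heq
    have hN : 0 < N := (Nat.zero_le _).trans_lt (hcls X hX)
    rw [hcls_eq, Nat.add_left_cancel_iff, Nat.mul_left_cancel_iff hN] at heq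
    exact hne _ X ⟨hX, hcls_eq⟩ Y ⟨hY, rfl⟩ hXY hint heq

end FamColorable

structure BlockDecomposition {β : Type*} [LinearOrder β] (F : Set (Set (ℝ × ℝ)))
    (k : Set (ℝ × ℝ) → β) (b : ℕ) where
  blk : Set (ℝ × ℝ) → ℕ
  last : ℕ
  blk_le_last : ∀ X ∈ F, blk X ≤ last
  blk_mono : ∀ X ∈ F, ∀ Y ∈ F, k X < k Y → blk X ≤ blk Y
  colorable : ∀ j, FamColorable {X ∈ F | blk X = j} (b + 1)
  not_colorable : ∀ j < last, ¬ FamColorable {X ∈ F | blk X = j} b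
  colorable_last : FamColorable {X ∈ F | blk X = last} b

namespace BlockDecomposition

variable {β : Type*} [LinearOrder β] {F : Set (Set (ℝ × ℝ))} {k : Set (ℝ × ℝ) → β} {b : ℕ}

/-- The greedy step: a new rightmost member joins the last block, which is closed if it
stops being `b`-colorable. -/
theorem extend (D : BlockDecomposition F k b) {M : Set (ℝ × ℝ)} (hM : M ∉ F)
    (hmax : ∀ X ∈ F, k X ≤ k M) : Nonempty (BlockDecomposition (insert M F) k b) := by
  classical
  set blk' := Function.update D.blk M D.last
  have blk'_of_mem : ∀ X ∈ F, blk' X = D.blk X := fun X hX =>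
    Function.update_of_ne (ne_of_mem_of_not_mem hX hM) _ _
  have hle : ∀ X ∈ insert M F, blk' X ≤ D.last := by
    rintro X (rfl | hX)
    · simp [blk']
    · exact (blk'_of_mem X hX).trans_le (D.blk_le_last X hX)
  have hmono : ∀ X ∈ insert M F, ∀ Y ∈ insert M F, k X < k Y → blk' X ≤ blk' Y := by
    rintro X hX Y (rfl | hY) hXY
    · simpa [blk'] using hle X hX
    · rcases hX with rfl | hX
      · exact absurd (hmax Y hY) (not_le.2 hXY)
      · rw [blk'_of_mem X hX, blk'_of_mem Y hY]
        exact D.blk_mono X hX Y hY hXY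
  have hsup : ∀ j, {X ∈ F | D.blk X = j} ⊆ {X ∈ insert M F | blk' X = j} :=
    fun j X ⟨hX, hXj⟩ => ⟨Or.inr hX, (blk'_of_mem X hX).trans hXj⟩
  have hsub : ∀ j ≠ D.last, {X ∈ insert M F | blk' X = j} ⊆ {X ∈ F | D.blk X = j} := by
    rintro j hj X ⟨rfl | hX, hXj⟩
    · simp [blk'] at hXj
      exact (hj hXj.symm).elim
    · exact ⟨hX, (blk'_of_mem X hX).symm.trans hXj⟩
  have hlast : {X ∈ insert M F | blk' X = D.last} = insert M {X ∈ F | D.blk X = D.last} := by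
    ext X
    by_cases hXM : X = M
    · subst hXM; simp [blk']
    · simp [blk', hXM]
  by_cases hfit : FamColorable (insert M {X ∈ F | D.blk X = D.last}) b
  · refine ⟨{
      blk := blk'
      last := D.last
      blk_le_last := hle
      blk_mono := hmono
      colorable := fun j => ?_
      not_colorable := fun j hj h => D.not_colorable j hj (h.subset (hsup j))
      colorable_last := hlast ▸ hfit }⟩
    rcases eq_or_ne j D.last with rfl | hj
    · exact (hlast ▸ hfit).mono b.le_succ
    · exact (D.colorable j).subset (hsub j hj)
  · refine ⟨{
      blk := blk'
      last := D.last + 1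
      blk_le_last := fun X hX => (hle X hX).trans D.last.le_succ
      blk_mono := hmono
      colorable := fun j => ?_
      not_colorable := fun j hj h => ?_
      colorable_last := FamColorable.of_subset_empty
        (fun X hX => by have := hle X hX.1; have := hX.2; omega) b }⟩
    · rcases eq_or_ne j D.last with rfl | hj
      · exact hlast ▸ D.colorable_last.insert M
      · exact (D.colorable j).subset (hsub j hj)
    · rcases (Nat.lt_succ_iff.1 hj).lt_or_eq with hj | rfl
      · exact D.not_colorable j hj (h.subset (hsup j))
      · exact hfit (hlast ▸ h)

theorem nonempty_of_finite (hF : F.Finite) : Nonempty (BlockDecomposition F k b) := by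
  classical
  rw [← hF.coe_toFinset]
  induction hF.toFinset using Finset.induction_on_max_value k with
  | empty =>
    rw [Finset.coe_empty]
    exact ⟨{
      blk := fun _ => 0
      last := 0
      blk_le_last := fun _ _ => le_rfl
      blk_mono := fun _ _ _ _ _ => le_rfl
      colorable := fun _ => FamColorable.of_subset_empty (fun _ hX => hX.1) _
      not_colorable := fun _ hj => (Nat.not_lt_zero _ hj).elim
      colorable_last := FamColorable.of_subset_empty (fun _ hX => hX.1) _ }⟩
  | insert M s hM hmax ih =>
    rw [Finset.coe_insert]
    exact ih.some.extend (by exact_mod_cast hM) hmax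

theorem key_lt_of_blk_lt (D : BlockDecomposition F k b) (hk : InjOn k F) {X Y : Set (ℝ × ℝ)}
    (hX : X ∈ F) (hY : Y ∈ F) (h : D.blk X < D.blk Y) : k X < k Y := by
  rcases lt_trichotomy (k X) (k Y) with hXY | hXY | hXY
  · exact hXY
  · exact absurd (congrArg D.blk (hk hX hY hXY)) h.ne
  · exact absurd (D.blk_mono Y hY X hX hXY) (not_le.2 h)

/-- A whole closed block lies strictly between `X` and `Z`. -/
theorem not_famColorable_between (D : BlockDecomposition F k b) (hk : InjOn k F)
    {X Z : Set (ℝ × ℝ)} (hX : X ∈ F) (hZ : Z ∈ F) (h : D.blk X + 2 ≤ D.blk Z) :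
    ¬ FamColorable {Y ∈ F | k X < k Y ∧ k Y < k Z} b := fun hcol =>
  D.not_colorable (D.blk X + 1) (by have := D.blk_le_last Z hZ; omega) <|
    hcol.subset fun Y ⟨hY, hYj⟩ =>
      ⟨hY, D.key_lt_of_blk_lt hk hX hY (by omega), D.key_lt_of_blk_lt hk hY hZ (by omega)⟩

end BlockDecomposition

theorem exists_separated_subfamily {β : Type*} [LinearOrder β] {F : Set (Set (ℝ × ℝ))}
    (hF : F.Finite) {k : Set (ℝ × ℝ) → β} (hk : InjOn k F) {a b : ℕ}
    (hχ : ¬ FamColorable F (2 * a * (b + 1))) :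
    ∃ H ⊆ F, ¬ FamColorable H a ∧
      ∀ X ∈ H, ∀ Z ∈ H, X ≠ Z → (X ∩ Z).Nonempty → k X < k Z →
        ¬ FamColorable {Y ∈ F | k X < k Y ∧ k Y < k Z} b := by
  by_contra! hsep
  obtain ⟨D⟩ := BlockDecomposition.nonempty_of_finite (k := k) (b := b) hF
  choose κ hκ_lt hκ_ne using D.colorable
  apply hχ
  rw [show 2 * a * (b + 1) = a * (2 * (b + 1)) by ring]
  refine FamColorable.of_fibers (fun X => 2 * κ (D.blk X) X + D.blk X % 2)
    (fun X hX => ?_) fun i => ?_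
  · have := hκ_lt _ X ⟨hX, rfl⟩
    omega
  · by_contra hi
    obtain ⟨X, ⟨hX, rfl⟩, Z, ⟨hZ, hXZ⟩, hne, hint, hkXZ, hcol⟩ := hsep _ (sep_subset _ _) hi
    have hsame : κ (D.blk X) X = κ (D.blk Z) Z ∧ D.blk X % 2 = D.blk Z % 2 := by omega
    have hblk : D.blk X ≠ D.blk Z := fun h =>
      hκ_ne _ X ⟨hX, rfl⟩ Z ⟨hZ, h.symm⟩ hne hint (h ▸ hsame.1)
    have := D.blk_mono X hX Z hZ hkXZ
    exact D.not_famColorable_between hk hX hZ (by omega) hcol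

noncomputable def baseLeft (X : Set (ℝ × ℝ)) : ℝ := sInf {x | ((x, 0) : ℝ × ℝ) ∈ X}

theorem baseLeft_eq {X : Set (ℝ × ℝ)} {u v : ℝ} (huv : u ≤ v)
    (hb : base X = Icc u v ×ˢ ({0} : Set ℝ)) : baseLeft X = u := by
  have hset : {x : ℝ | ((x, 0) : ℝ × ℝ) ∈ X} = Icc u v :=
    Set.ext fun x => by simpa [base, Baseline] using Set.ext_iff.1 hb (x, 0)
  rw [baseLeft, hset, csInf_Icc huv]

namespace GroundedFamily

variable {F : Set (Set (ℝ × ℝ))} (hF : GroundedFamily F)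
include hF

theorem injOn_baseLeft : InjOn baseLeft F := by
  intro X hX Y hY heq
  by_contra hXY
  obtain ⟨u, v, huv, hbX⟩ := (hF.2.1 X hX).2.2.2
  obtain ⟨u', v', huv', hbY⟩ := (hF.2.1 Y hY).2.2.2
  rw [baseLeft_eq huv hbX, baseLeft_eq huv' hbY] at heq
  subst heq
  have huX : ((u, 0) : ℝ × ℝ) ∈ base X := hbX ▸ ⟨left_mem_Icc.2 huv, rfl⟩
  have huY : ((u, 0) : ℝ × ℝ) ∈ base Y := hbY ▸ ⟨left_mem_Icc.2 huv', rfl⟩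
  exact disjoint_left.1 (hF.2.2.2 hX hY hXY) huX huY

theorem before_iff {X Y : Set (ℝ × ℝ)} (hX : X ∈ F) (hY : Y ∈ F) :
    Before X Y ↔ baseLeft X < baseLeft Y := by
  obtain ⟨u, v, huv, hbX⟩ := (hF.2.1 X hX).2.2.2
  have huX : ((u, 0) : ℝ × ℝ) ∈ base X := hbX ▸ ⟨left_mem_Icc.2 huv, rfl⟩
  rcases eq_or_ne X Y with rfl | hXY
  · simpa using fun h => lt_irrefl u (h _ huX _ huX)
  obtain ⟨u', v', huv', hbY⟩ := (hF.2.1 Y hY).2.2.2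
  have huY : ((u', 0) : ℝ × ℝ) ∈ base Y := hbY ▸ ⟨left_mem_Icc.2 huv', rfl⟩
  rw [baseLeft_eq huv hbX, baseLeft_eq huv' hbY]
  refine ⟨fun h => h _ huX _ huY, fun hlt p hp q hq => ?_⟩
  have hv : v < u' := by
    by_contra! h
    exact disjoint_left.1 (hF.2.2.2 hX hY hXY) (hbX ▸ ⟨⟨hlt.le, h⟩, rfl⟩) huY
  rw [hbX] at hp
  rw [hbY] at hq
  linarith [hp.1.2, hq.1.1]

end GroundedFamily

/-- Decomposition lemma: from a grounded family of chromatic number `> 2a(b+1)`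
extract a subfamily `H` with `χ(H) > a` all of whose intersecting pairs span a
subfamily of chromatic number `> b`. -/
theorem decomposition_graph
    (F : Set (Set (ℝ × ℝ))) (hF : GroundedFamily F) (a b : ℕ)
    (hχ : ¬ FamColorable F (2 * a * (b + 1))) :
    ∃ H ⊆ F, ¬ FamColorable H a ∧
      ∀ H₁ ∈ H, ∀ H₂ ∈ H, H₁ ≠ H₂ → (H₁ ∩ H₂).Nonempty → Before H₁ H₂ →
        ¬ FamColorable {Y ∈ F | Before H₁ Y ∧ Before Y H₂} b := by
  obtain ⟨H, hHF, hHa, hsep⟩ := exists_separated_subfamily hF.1 hF.injOn_baseLeft hχ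
  refine ⟨H, hHF, hHa, fun H₁ h₁ H₂ h₂ hne hint hbef => ?_⟩
  have hbetween : {Y ∈ F | Before H₁ Y ∧ Before Y H₂} =
      {Y ∈ F | baseLeft H₁ < baseLeft Y ∧ baseLeft Y < baseLeft H₂} :=
    Set.ext fun Y => and_congr_right fun hY =>
      and_congr (hF.before_iff (hHF h₁) hY) (hF.before_iff hY (hHF h₂))
  rw [hbetween]
  exact hsep H₁ h₁ H₂ h₂ hne hint ((hF.before_iff (hHF h₁) (hHF h₂)).1 hbef)
end

section
/- Let F be a grounded family and a ≥ 1 an integer with χ(F) > 2a. Then there is a subfamily G ⊆ F that is externally supported in F and satisfies χ(G) > a. -/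
open Set

/-!
Take a component of the intersection graph that is not `2a`-colourable and, in it, the member `X₀`
whose base reaches furthest right; split the component into the distance levels from `X₀`.
Adjacent members lie on equal or consecutive levels, so if every level were `a`-colourable,
alternating two palettes of `a` colours between even and odd levels would `2a`-colour the
component. Hence some level `d ≥ 1` is not `a`-colourable, and it is externally supported: for `X`
on it take a shortest path `X₀, …, X_{d-1}, X`. The baseline ray to the right of the base of `X₀`
meets no other member of the component, so the ray together with `X₀, …, X_{d-2}` is a
path-connected unbounded set missing level `d`, hence lies in its exterior, and `X_{d-1}` meets
both this set and `X`.
-/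

open SimpleGraph Bornology

theorem SimpleGraph.Walk.edist_getVert_le {V : Type*} {G : SimpleGraph V} {u v : V}
    (p : G.Walk u v) (i : ℕ) : G.edist u (p.getVert i) ≤ i :=
  (edist_le (p.take i)).trans (by simp [Walk.take_length])

theorem IsPathConnected.union_biUnion_lt {α : Type*} [TopologicalSpace α] {s : Set α}
    {t : ℕ → Set α} {n : ℕ} (hs : IsPathConnected s) (ht : ∀ i < n, IsPathConnected (t i))
    (hlink : ∀ i < n, ((s ∪ ⋃ j < i, t j) ∩ t i).Nonempty) :
    IsPathConnected (s ∪ ⋃ i < n, t i) := by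
  induction n with
  | zero => simpa using hs
  | succ n ih =>
    rw [biUnion_lt_succ, ← union_assoc]
    exact (ih (fun i hi => ht i (by omega)) (fun i hi => hlink i (by omega))).union
      (ht n n.lt_succ_self) (hlink n n.lt_succ_self)

section IntersectionGraph

variable {F : Set (Set (ℝ × ℝ))} {X₀ X Y Z : Set (ℝ × ℝ)} {a n : ℕ}

def intersectionGraph (F : Set (Set (ℝ × ℝ))) : SimpleGraph (Set (ℝ × ℝ)) where
  Adj X Y := X ∈ F ∧ Y ∈ F ∧ X ≠ Y ∧ (X ∩ Y).Nonempty
  symm := ⟨fun _ _ ⟨hX, hY, hne, hXY⟩ => ⟨hY, hX, hne.symm, by rwa [inter_comm]⟩⟩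
  loopless := ⟨fun _ h => h.2.2.1 rfl⟩

@[simp]
theorem intersectionGraph_adj :
    (intersectionGraph F).Adj X Y ↔ X ∈ F ∧ Y ∈ F ∧ X ≠ Y ∧ (X ∩ Y).Nonempty :=
  Iff.rfl

def level (F : Set (Set (ℝ × ℝ))) (X₀ : Set (ℝ × ℝ)) (d : ℕ) : Set (Set (ℝ × ℝ)) :=
  {Y | (intersectionGraph F).edist X₀ Y = d}

def ExternallySupported (G F : Set (Set (ℝ × ℝ))) : Prop :=
  ∀ X ∈ G, ∃ Y ∈ F, (Y ∩ X).Nonempty ∧ (Y ∩ extSet (⋃₀ G)).Nonempty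

theorem mem_of_reachable (hX : X ∈ F) (h : (intersectionGraph F).Reachable X Y) : Y ∈ F := by
  obtain ⟨p⟩ := h
  induction p with
  | nil => exact hX
  | cons hadj _ ih => exact ih (intersectionGraph_adj.mp hadj).2.1

theorem reachable_of_mem_level {d : ℕ} (hY : Y ∈ level F X₀ d) :
    (intersectionGraph F).Reachable X₀ Y :=
  reachable_of_edist_ne_top (hY ▸ ENat.natCast_ne_top d)

theorem level_subset (hX₀ : X₀ ∈ F) (d : ℕ) : level F X₀ d ⊆ F := fun _ hY =>
  mem_of_reachable hX₀ (reachable_of_mem_level hY)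

theorem level_zero : level F X₀ 0 = {X₀} := by
  ext Y
  simp [level]

theorem ne_of_mem_level {d : ℕ} (hd : d ≠ 0) (hY : Y ∈ level F X₀ d) : Y ≠ X₀ := by
  rintro rfl
  exact hd (by simpa [level] using hY.symm)

theorem disjoint_of_edist_add_one_lt (hY : Y ∈ F) (hZ : Z ∈ F)
    (h : (intersectionGraph F).edist X₀ Y + 1 < (intersectionGraph F).edist X₀ Z) :
    Disjoint Y Z := by
  rw [Set.disjoint_iff_inter_eq_empty, ← not_nonempty_iff_eq_empty]
  intro hYZ
  have hne : Y ≠ Z := by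
    rintro rfl
    exact h.not_ge le_self_add
  have hadj := edist_eq_one_iff_adj.mpr (intersectionGraph_adj.mpr ⟨hY, hZ, hne, hYZ⟩)
  exact h.not_ge (hadj ▸ SimpleGraph.edist_triangle)

theorem famColorable_singleton (ha : 1 ≤ a) : FamColorable {X} a :=
  ⟨fun _ => 0, fun _ _ => ha, fun _ hY _ hZ hne _ => absurd (hY.trans hZ.symm) hne⟩

theorem famColorable_of_forall_reachable
    (h : ∀ X ∈ F, FamColorable {Z | (intersectionGraph F).Reachable X Z} n) :
    FamColorable F n := by
  choose! col hcol_lt hcol_ne using h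
  set G := intersectionGraph F
  let root : Set (ℝ × ℝ) → Set (ℝ × ℝ) := fun Y => Quot.out (G.connectedComponentMk Y)
  have root_reachable (Y : Set (ℝ × ℝ)) : G.Reachable (root Y) Y :=
    ConnectedComponent.exact (Quot.out_eq (G.connectedComponentMk Y))
  have root_mem {Y} (hY : Y ∈ F) : root Y ∈ F := mem_of_reachable hY (root_reachable Y).symm
  refine ⟨fun Y => col (root Y) Y, fun Y hY => hcol_lt _ (root_mem hY) Y (root_reachable Y),
    fun Y hY Z hZ hne hYZ => ?_⟩
  have hadj : G.Adj Y Z := intersectionGraph_adj.mpr ⟨hY, hZ, hne, hYZ⟩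
  have hroot : root Z = root Y := congrArg Quot.out (ConnectedComponent.sound hadj.reachable).symm
  simp only [hroot]
  exact hcol_ne _ (root_mem hY) Y (root_reachable Y) Z (hroot ▸ root_reachable Z) hne hYZ

theorem famColorable_reachable_of_levels (hX₀ : X₀ ∈ F)
    (h : ∀ d, FamColorable (level F X₀ d) a) :
    FamColorable {Z | (intersectionGraph F).Reachable X₀ Z} (2 * a) := by
  choose col hcol_lt hcol_ne using h
  set G := intersectionGraph F
  have mem_level {Y} (hY : G.Reachable X₀ Y) : Y ∈ level F X₀ (G.dist X₀ Y) :=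
    hY.coe_dist_eq_edist.symm
  refine ⟨fun Y => col (G.dist X₀ Y) Y + a * (G.dist X₀ Y % 2), fun Y hY => ?_,
    fun Y hY Z hZ hne hYZ => ?_⟩
  · have := hcol_lt _ Y (mem_level hY)
    have : a * (G.dist X₀ Y % 2) ≤ a * 1 := Nat.mul_le_mul_left a (by omega)
    simp only
    omega
  · have hadj : G.Adj Y Z :=
      intersectionGraph_adj.mpr ⟨mem_of_reachable hX₀ hY, mem_of_reachable hX₀ hZ, hne, hYZ⟩
    have hY_lt := hcol_lt _ Y (mem_level hY)
    have hZ_lt := hcol_lt _ Z (mem_level hZ)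
    simp only
    have hle_succ : G.dist X₀ Z ≤ G.dist X₀ Y + 1 := by
      simpa [dist_eq_one_iff_adj.mpr hadj] using hY.dist_triangle_left Z
    have hge_pred : G.dist X₀ Y ≤ G.dist X₀ Z + 1 := by
      simpa [dist_eq_one_iff_adj.mpr hadj.symm] using hZ.dist_triangle_left Y
    by_cases hdist : G.dist X₀ Y = G.dist X₀ Z
    · rw [← hdist]
      have := hcol_ne _ Y (mem_level hY) Z (hdist ▸ mem_level hZ) hne hYZ
      omega
    · rcases Nat.mod_two_eq_zero_or_one (G.dist X₀ Y) with hpar | hpar <;>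
      · have : G.dist X₀ Z % 2 = 1 - G.dist X₀ Y % 2 := by omega
        rw [this, hpar]
        simp only [Nat.mul_zero, Nat.mul_one]
        omega

end IntersectionGraph

theorem IsPathConnected.subset_extSet {B S : Set (ℝ × ℝ)} (hB : IsPathConnected B)
    (hunb : ¬IsBounded B) (hBS : B ⊆ UpperHalf \ S) : B ⊆ extSet S :=
  fun _ hp => ⟨hBS hp, fun hb => hunb (hb.subset (hB.subset_pathComponentIn hp hBS))⟩

noncomputable def rightEnd (X : Set (ℝ × ℝ)) : ℝ := sSup (Prod.fst '' base X)

theorem Grounded.isGreatest_rightEnd {X : Set (ℝ × ℝ)} (hX : Grounded X) :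
    IsGreatest (Prod.fst '' base X) (rightEnd X) := by
  obtain ⟨-, -, -, l, r, hlr, hbase⟩ := hX
  rw [rightEnd, hbase, fst_image_prod _ (singleton_nonempty 0), (isGreatest_Icc hlr).csSup_eq]
  exact isGreatest_Icc hlr

theorem Grounded.rightEnd_mem {X : Set (ℝ × ℝ)} (hX : Grounded X) : (rightEnd X, 0) ∈ X := by
  obtain ⟨p, ⟨hpX, hp0⟩, hp⟩ := hX.isGreatest_rightEnd.1
  rwa [← hp, ← show p.2 = 0 from hp0]

def ray (r : ℝ) : Set (ℝ × ℝ) := Ici r ×ˢ {0}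

theorem ray_subset_upperHalf (r : ℝ) : ray r ⊆ UpperHalf := by
  rintro p ⟨-, hp⟩
  simp_all [UpperHalf]

theorem isPathConnected_ray (r : ℝ) : IsPathConnected (ray r) :=
  ((convex_Ici r).prod (convex_singleton 0)).isPathConnected ⟨(r, 0), self_mem_Ici, rfl⟩

theorem not_isBounded_ray (r : ℝ) : ¬IsBounded (ray r) := by
  simp only [ray, isBounded_prod, nonempty_Ici.ne_empty, singleton_ne_empty, false_or]
  exact fun h => not_bddAbove_Ici r h.1.bddAbove

theorem GroundedFamily.disjoint_ray {F : Set (Set (ℝ × ℝ))} (hF : GroundedFamily F)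
    {X₀ Z : Set (ℝ × ℝ)} (hX₀ : X₀ ∈ F) (hZ : Z ∈ F) (hne : Z ≠ X₀)
    (hle : rightEnd Z ≤ rightEnd X₀) : Disjoint (ray (rightEnd X₀)) Z := by
  rw [Set.disjoint_left]
  rintro ⟨x, y⟩ ⟨hx, hy⟩ hpZ
  obtain rfl : y = 0 := hy
  have hxZ : x ≤ rightEnd Z := (hF.2.1 Z hZ).isGreatest_rightEnd.2 ⟨(x, 0), ⟨hpZ, rfl⟩, rfl⟩
  obtain rfl : x = rightEnd X₀ := le_antisymm (hxZ.trans hle) hx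
  exact disjoint_left.mp (hF.2.2.2 hZ hX₀ hne) ⟨hpZ, rfl⟩ ⟨(hF.2.1 X₀ hX₀).rightEnd_mem, rfl⟩

theorem level_externallySupported {F : Set (Set (ℝ × ℝ))} (hF : GroundedFamily F)
    {X₀ : Set (ℝ × ℝ)} (hX₀ : X₀ ∈ F) {r : ℝ} (hr : (r, 0) ∈ X₀)
    (hray : ∀ Z, (intersectionGraph F).Reachable X₀ Z → Z ≠ X₀ → Disjoint (ray r) Z)
    {d : ℕ} (hd : d ≠ 0) : ExternallySupported (level F X₀ d) F := by
  intro X hX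
  obtain ⟨p, hp⟩ := exists_walk_of_edist_eq_coe hX
  have adj {i} (hi : i < d) := intersectionGraph_adj.mp (p.adj_getVert_succ (hp ▸ hi))
  have hlink : ∀ i < d, ((ray r ∪ ⋃ j < i, p.getVert j) ∩ p.getVert i).Nonempty := by
    rintro (_ | i) hi
    · exact ⟨(r, 0), Or.inl ⟨self_mem_Ici, rfl⟩, by rwa [p.getVert_zero]⟩
    · obtain ⟨q, hq, hq'⟩ := (adj (i := i) (by omega)).2.2.2
      exact ⟨q, Or.inr (mem_biUnion i.lt_succ_self hq), hq'⟩
  set B := ray r ∪ ⋃ j < d - 1, p.getVert j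
  have hB_pc : IsPathConnected B := (isPathConnected_ray r).union_biUnion_lt
    (fun i hi => (hF.2.1 _ (adj (by omega)).1).2.2.1) (fun i hi => hlink i (by omega))
  have hB_sub : B ⊆ UpperHalf \ ⋃₀ level F X₀ d := by
    rintro q (hq | hq)
    · refine ⟨ray_subset_upperHalf r hq, ?_⟩
      rintro ⟨Z, hZ, hqZ⟩
      exact disjoint_left.mp (hray Z (reachable_of_mem_level hZ) (ne_of_mem_level hd hZ)) hq hqZ
    · obtain ⟨j, hj, hqj⟩ := mem_iUnion₂.mp hq
      refine ⟨(hF.2.1 _ (adj (by omega)).1).1 hqj, ?_⟩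
      rintro ⟨Z, hZ, hqZ⟩
      refine disjoint_left.mp (disjoint_of_edist_add_one_lt (X₀ := X₀) (adj (by omega)).1
        (level_subset hX₀ d hZ) ?_) hqj hqZ
      calc (intersectionGraph F).edist X₀ (p.getVert j) + 1 ≤ j + 1 := by
            gcongr; exact p.edist_getVert_le j
        _ < d := by norm_cast; omega
        _ = (intersectionGraph F).edist X₀ Z := hZ.symm
  have hB_ext : B ⊆ extSet (⋃₀ level F X₀ d) :=
    hB_pc.subset_extSet (fun h => not_isBounded_ray r (h.subset subset_union_left)) hB_sub
  refine ⟨p.getVert (d - 1), (adj (by omega)).1, ?_, ?_⟩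
  · have := (adj (i := d - 1) (by omega)).2.2.2
    have hX_eq : p.getVert d = X := hp ▸ p.getVert_length
    rwa [Nat.sub_add_cancel (Nat.one_le_iff_ne_zero.mpr hd), hX_eq] at this
  · obtain ⟨q, hqB, hq⟩ := hlink (d - 1) (by omega)
    exact ⟨q, hq, hB_ext hqB⟩

/-- Decomposition lemma: a grounded family of chromatic number `> 2a` contains an
externally supported subfamily of chromatic number `> a`. -/
theorem decomposition_level
    (F : Set (Set (ℝ × ℝ))) (hF : GroundedFamily F) (a : ℕ) (ha : 1 ≤ a)
    (hχ : ¬ FamColorable F (2 * a)) :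
    ∃ G ⊆ F,
      (∀ X ∈ G, ∃ Y ∈ F, (Y ∩ X).Nonempty ∧ (Y ∩ extSet (⋃₀ G)).Nonempty) ∧
      ¬ FamColorable G a := by
  set G := intersectionGraph F
  obtain ⟨X₁, hX₁, hK⟩ : ∃ X₁ ∈ F, ¬FamColorable {Z | G.Reachable X₁ Z} (2 * a) := by
    by_contra! h
    exact hχ (famColorable_of_forall_reachable h)
  obtain ⟨X₀, hX₀K, hX₀_max⟩ := exists_max_image {Z | G.Reachable X₁ Z} rightEnd
    (hF.1.subset fun _ => mem_of_reachable hX₁) ⟨X₁, Reachable.refl X₁⟩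
  have hX₀ : X₀ ∈ F := mem_of_reachable hX₁ hX₀K
  have hK₀ : {Z | G.Reachable X₀ Z} = {Z | G.Reachable X₁ Z} :=
    ext fun Z => ⟨hX₀K.trans, hX₀K.symm.trans⟩
  obtain ⟨d, hd⟩ : ∃ d, ¬FamColorable (level F X₀ d) a := by
    by_contra! h
    exact hK (hK₀ ▸ famColorable_reachable_of_levels hX₀ h)
  have hd0 : d ≠ 0 := by
    rintro rfl
    exact hd (level_zero ▸ famColorable_singleton ha)
  have hray (Z) (hZ : G.Reachable X₀ Z) (hne : Z ≠ X₀) : Disjoint (ray (rightEnd X₀)) Z :=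
    hF.disjoint_ray hX₀ (mem_of_reachable hX₀ hZ) hne (hX₀_max Z (hX₀K.trans hZ))
  exact ⟨level F X₀ d, level_subset hX₀ d,
    level_externallySupported hF hX₀ (hF.2.1 X₀ hX₀).rightEnd_mem hray hd0, hd⟩
end

section
/- Let F be a grounded family, let X, Y, Z ∈ F with X ∩ Y ≠ ∅, and let C₁ and C₂ be two distinct path-connected components of H \ (X ∪ Y). Let z, z′ be distinct points of Z ∩ C₁. If every arc between z and z′ within Z intersects C₂, then every arc between z and z′ within Z intersects both X and Y. -/
open Set

/-!
Suppose an arc `A ⊆ Z` from `z` to `z'` misses `X`. The path component `C₂` of `H \ (X ∪ Y)` is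
relatively open in `H` and its frontier in `H` lies in `X ∪ Y`, so the first and the last points
where `A` reaches the closure of `C₂` lie in `Y`. Replacing the part of `A` between them by a path
in the path-connected set `Z ∩ Y` gives a path from `z` to `z'` in `Z \ C₂`, and every path
between distinct points contains an arc, which contradicts the hypothesis on `C₂`.

The arc inside a path `γ` is obtained by erasing loops. By Zorn's lemma there is a minimal closed
set `K ∋ 0, 1` of times each of whose gaps is a loop of `γ`. Following `γ` only at the last time
of `K` before `t` gives a path whose fibres are intervals, and collapsing these intervals by a
continuous monotone function (a weighted sum of excursions from a dense sequence of times) turns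
it into an injective path.
-/

open Set Filter Topology unitInterval Function

section FloorIn

variable {α : Type*} [CompleteLinearOrder α] {K : Set α} {s t : α}

def floorIn (K : Set α) (t : α) : α := sSup (K ∩ Iic t)

lemma floorIn_le (K : Set α) (t : α) : floorIn K t ≤ t := sSup_le fun _ h => h.2

lemma le_floorIn (hs : s ∈ K) (hst : s ≤ t) : s ≤ floorIn K t := le_sSup ⟨hs, hst⟩

lemma floorIn_eq_self (ht : t ∈ K) : floorIn K t = t :=
  (floorIn_le K t).antisymm (le_floorIn ht le_rfl)

lemma monotone_floorIn (K : Set α) : Monotone (floorIn K) := fun _ _ h =>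
  sSup_le_sSup (inter_subset_inter_right K (Iic_subset_Iic.2 h))

variable [TopologicalSpace α] [OrderTopology α]

lemma floorIn_mem (hK : IsClosed K) (hs : s ∈ K) (hst : s ≤ t) : floorIn K t ∈ K :=
  ((hK.inter isClosed_Iic).sSup_mem (⟨s, hs, hst⟩ : (K ∩ Iic t).Nonempty)).1

lemma image_floorIn_Iio (hK : IsClosed K) (hbot : ⊥ ∈ K) (t : α) :
    floorIn K '' Iio t = K ∩ Iio t := by
  ext s
  constructor
  · rintro ⟨u, hu, rfl⟩
    exact ⟨floorIn_mem hK hbot bot_le, (floorIn_le K u).trans_lt hu⟩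
  · rintro ⟨hs, hst⟩
    exact ⟨s, hst, floorIn_eq_self hs⟩

lemma sSup_inter_Iio_mem (hK : IsClosed K) (hbot : ⊥ ∈ K) (t : α) : sSup (K ∩ Iio t) ∈ K := by
  rcases (K ∩ Iio t).eq_empty_or_nonempty with h | h
  · rwa [h, sSup_empty]
  · exact closure_minimal inter_subset_left hK (sSup_mem_closure h)

lemma tendsto_floorIn_nhdsLT (hK : IsClosed K) (hbot : ⊥ ∈ K) (t : α) :
    Tendsto (floorIn K) (𝓝[<] t) (𝓝 (sSup (K ∩ Iio t))) := by
  simpa only [image_floorIn_Iio hK hbot] using (monotone_floorIn K).tendsto_nhdsLT t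

lemma tendsto_floorIn_nhdsGT (hK : IsClosed K) (hbot : ⊥ ∈ K) (t : α) :
    Tendsto (floorIn K) (𝓝[>] t) (𝓝 (floorIn K t)) := by
  rcases (𝓝[>] t).eq_or_neBot with h | h
  · simp [h]
  have hlim := (monotone_floorIn K).tendsto_nhdsGT t
  have hmem : sInf (floorIn K '' Ioi t) ∈ K :=
    hK.mem_of_tendsto hlim (Eventually.of_forall fun _ => floorIn_mem hK hbot bot_le)
  have hle : sInf (floorIn K '' Ioi t) ≤ t :=
    le_of_tendsto_of_tendsto' hlim (tendsto_nhdsWithin_of_tendsto_nhds tendsto_id)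
      fun u => floorIn_le K u
  have heq : sInf (floorIn K '' Ioi t) = floorIn K t :=
    (le_floorIn hmem hle).antisymm
      (le_sInf (by rintro _ ⟨u, hu, rfl⟩; exact monotone_floorIn K (le_of_lt hu)))
  rwa [heq] at hlim

lemma exists_gap_of_notMem (hK : IsClosed K) {a b m : α} (ha : a ∈ K) (hb : b ∈ K)
    (ham : a ≤ m) (hmb : m ≤ b) (hm : m ∉ K) :
    ∃ a' ∈ K, ∃ b' ∈ K, a ≤ a' ∧ a' < m ∧ m < b' ∧ b' ≤ b ∧ Disjoint (Ioo a' b') K := by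
  have hb' : sInf (K ∩ Ici m) ∈ K ∩ Ici m := (hK.inter isClosed_Ici).sInf_mem ⟨b, hb, hmb⟩
  refine ⟨floorIn K m, floorIn_mem hK ha ham, _, hb'.1, le_floorIn ha ham,
    (floorIn_le K m).lt_of_ne fun h => hm (h ▸ floorIn_mem hK ha ham),
    hb'.2.lt_of_ne fun h => hm (h ▸ hb'.1), sInf_le ⟨hb, hmb⟩, disjoint_left.2 ?_⟩
  intro x hx hxK
  rcases le_total x m with hxm | hmx
  · exact hx.1.not_ge (le_floorIn hxK hxm)
  · exact hx.2.not_ge (sInf_le ⟨hxK, hmx⟩)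

end FloorIn

theorem IsCompact.exists_disjoint_of_isChain {X : Type*} [TopologicalSpace X] {s : Set X}
    {c : Set (Set X)} (hs : IsCompact s) (hc : ∀ K ∈ c, IsClosed K) (hchain : IsChain (· ⊆ ·) c)
    (hne : c.Nonempty) (hsc : Disjoint s (⋂₀ c)) : ∃ K ∈ c, Disjoint s K := by
  have := hne.to_subtype
  obtain ⟨⟨K, hK⟩, hsK⟩ := hs.elim_directed_family_closed _ (fun K : c => hc K K.2)
    (by rwa [← sInter_eq_iInter, ← disjoint_iff_inter_eq_empty]) fun K L =>
      (hchain.total K.2 L.2).elim (fun h => ⟨K, subset_rfl, h⟩) (fun h => ⟨L, h, subset_rfl⟩)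
  exact ⟨K, hK, disjoint_iff_inter_eq_empty.2 hsK⟩

section LoopErasure

variable {E : Type*} {γ : I → E} {K : Set I} {a b : I}

structure LoopGaps (γ : I → E) (K : Set I) : Prop where
  isClosed : IsClosed K
  zero_mem : (0 : I) ∈ K
  one_mem : (1 : I) ∈ K
  eq_of_disjoint : ∀ a ∈ K, ∀ b ∈ K, a ≤ b → Disjoint (Ioo a b) K → γ a = γ b

lemma loopGaps_univ (γ : I → E) : LoopGaps γ univ where
  isClosed := isClosed_univ
  zero_mem := trivial
  one_mem := trivial
  eq_of_disjoint a _ b _ hab hdis := by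
    obtain rfl : a = b := hab.antisymm (not_lt.1 (Ioo_eq_empty_iff.1 (disjoint_univ.1 hdis)))
    rfl

lemma LoopGaps.diff_Ioo (h : LoopGaps γ K) (ha : a ∈ K) (hb : b ∈ K) (hab : γ a = γ b) :
    LoopGaps γ (K \ Ioo a b) where
  isClosed := h.isClosed.sdiff isOpen_Ioo
  zero_mem := ⟨h.zero_mem, fun h0 => not_lt_bot h0.1⟩
  one_mem := ⟨h.one_mem, fun h1 => not_top_lt h1.2⟩
  eq_of_disjoint a' ha' b' hb' hab' hdis := by
    by_cases hK : Disjoint (Ioo a' b') K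
    · exact h.eq_of_disjoint a' ha'.1 b' hb'.1 hab' hK
    obtain ⟨x, hx, hxK⟩ := not_disjoint_iff.1 hK
    have hxab : x ∈ Ioo a b := by_contra fun hx' => disjoint_left.1 hdis hx ⟨hxK, hx'⟩
    have ha'a : a' ≤ a := not_lt.1 fun h' => ha'.2 ⟨h', hx.1.trans hxab.2⟩
    have hbb' : b ≤ b' := not_lt.1 fun h' => hb'.2 ⟨hxab.1.trans hx.2, h'⟩
    have h₁ : γ a' = γ a := h.eq_of_disjoint a' ha'.1 a ha ha'a <| disjoint_left.2 fun y hy hyK =>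
      disjoint_left.1 hdis ⟨hy.1, hy.2.trans (hxab.1.trans hx.2)⟩
        ⟨hyK, fun hy' => hy.2.not_gt hy'.1⟩
    have h₂ : γ b = γ b' := h.eq_of_disjoint b hb b' hb'.1 hbb' <| disjoint_left.2 fun y hy hyK =>
      disjoint_left.1 hdis ⟨(hx.1.trans hxab.2).trans hy.1, hy.2⟩
        ⟨hyK, fun hy' => hy.1.not_gt hy'.2⟩
    rw [h₁, hab, h₂]

lemma LoopGaps.disjoint_of_minimal (h : Minimal (LoopGaps γ) K) (ha : a ∈ K) (hb : b ∈ K)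
    (hab : γ a = γ b) : Disjoint (Ioo a b) K :=
  disjoint_left.2 fun _ hx hxK => (h.2 (h.1.diff_Ioo ha hb hab) sdiff_subset hxK).2 hx

lemma LoopGaps.apply_sSup_inter_Iio (h : LoopGaps γ K) (t : I) :
    γ (sSup (K ∩ Iio t)) = γ (floorIn K t) := by
  have hmem := sSup_inter_Iio_mem h.isClosed h.zero_mem t
  have hle : sSup (K ∩ Iio t) ≤ t := sSup_le fun _ hx => hx.2.le
  refine h.eq_of_disjoint _ hmem _ (floorIn_mem h.isClosed h.zero_mem bot_le)
    (le_floorIn hmem hle) (disjoint_left.2 fun x hx hxK => hx.1.not_ge ?_)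
  exact le_sSup ⟨hxK, hx.2.trans_le (floorIn_le K t)⟩

variable [TopologicalSpace E]

lemma LoopGaps.sInter [T2Space E] (hγ : Continuous γ) {c : Set (Set I)}
    (hc : ∀ K ∈ c, LoopGaps γ K) (hchain : IsChain (· ⊆ ·) c) (hne : c.Nonempty) :
    LoopGaps γ (⋂₀ c) where
  isClosed := isClosed_sInter fun K hK => (hc K hK).isClosed
  zero_mem := mem_sInter.2 fun K hK => (hc K hK).zero_mem
  one_mem := mem_sInter.2 fun K hK => (hc K hK).one_mem
  eq_of_disjoint a ha b hb hab hdis := by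
    rcases hab.eq_or_lt with rfl | hab
    · rfl
    -- `(a, b)` is a limit of pairs of gap endpoints of members of the chain
    suffices (a, b) ∈ closure {p : I × I | γ p.1 = γ p.2} from
      isClosed_eq (hγ.comp continuous_fst) (hγ.comp continuous_snd) |>.closure_subset this
    refine mem_closure_iff_nhds.2 fun W hW => ?_
    obtain ⟨U, hU, V, hV, hUV⟩ := mem_prod_iff.1 (nhds_prod_eq (x := a) (y := b) ▸ hW)
    obtain ⟨m, ham, hmb⟩ := exists_between hab
    obtain ⟨u, hau, hu⟩ :=
      (mem_nhdsGE_iff_exists_Ico_subset' ham).1 (mem_nhdsWithin_of_mem_nhds hU)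
    obtain ⟨v, hvb, hv⟩ :=
      (mem_nhdsLE_iff_exists_Ioc_subset' hmb).1 (mem_nhdsWithin_of_mem_nhds hV)
    obtain ⟨K, hK, hKmid⟩ := isCompact_Icc.exists_disjoint_of_isChain (s := Icc (min u m) (max v m))
      (fun K hK => (hc K hK).isClosed) hchain hne <| disjoint_left.2 fun x hx =>
        disjoint_left.1 hdis ⟨(lt_min hau ham).trans_le hx.1, hx.2.trans_lt (max_lt hvb hmb)⟩
    have hKmid' := disjoint_right.1 hKmid
    obtain ⟨a', ha', b', hb', haa', ha'm, hmb', hb'b, hgap⟩ :=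
      exists_gap_of_notMem (hc K hK).isClosed (ha K hK) (hb K hK) ham.le hmb.le
        fun hm => hKmid' hm ⟨min_le_right _ _, le_max_right _ _⟩
    refine ⟨(a', b'), hUV ⟨hu ⟨haa', ?_⟩, hv ⟨?_, hb'b⟩⟩,
      (hc K hK).eq_of_disjoint a' ha' b' hb' (ha'm.trans hmb').le hgap⟩
    · exact not_le.1 fun h =>
        hKmid' ha' ⟨(min_le_left _ _).trans h, ha'm.le.trans (le_max_right _ _)⟩
    · exact not_le.1 fun h =>
        hKmid' hb' ⟨(min_le_right _ _).trans hmb'.le, h.trans (le_max_left _ _)⟩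

lemma exists_minimal_loopGaps [T2Space E] (hγ : Continuous γ) : ∃ K, Minimal (LoopGaps γ) K := by
  obtain ⟨K, -, hK⟩ := zorn_superset_nonempty {K | LoopGaps γ K}
    (fun c hc hchain hne => ⟨⋂₀ c, LoopGaps.sInter hγ hc hchain hne,
      fun _ => sInter_subset_of_mem⟩) univ (loopGaps_univ γ)
  exact ⟨K, hK⟩

lemma LoopGaps.continuous_comp_floorIn (h : LoopGaps γ K) (hγ : Continuous γ) :
    Continuous (γ ∘ floorIn K) := by
  refine continuous_iff_continuousAt.2 fun t => continuousAt_iff_continuous_left_right.2 ⟨?_, ?_⟩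
  · have := (hγ.tendsto _).comp (tendsto_floorIn_nhdsLT h.isClosed h.zero_mem t)
    rw [h.apply_sSup_inter_Iio] at this
    exact continuousWithinAt_Iio_iff_Iic.1 this
  · exact hγ.continuousAt.comp_continuousWithinAt
      (continuousWithinAt_Ioi_iff_Ici.1 (tendsto_floorIn_nhdsGT h.isClosed h.zero_mem t))

theorem Path.exists_ordConnected_fibers [T2Space E] {x y : E} (γ : Path x y) :
    ∃ δ : Path x y, range δ ⊆ range γ ∧ ∀ p, (δ ⁻¹' {p}).OrdConnected := by
  obtain ⟨K, hK⟩ := exists_minimal_loopGaps γ.continuous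
  have hmem : ∀ t, floorIn K t ∈ K := fun t => floorIn_mem hK.1.isClosed hK.1.zero_mem bot_le
  refine ⟨⟨⟨γ ∘ floorIn K, hK.1.continuous_comp_floorIn γ.continuous⟩, ?_, ?_⟩,
    by rintro _ ⟨t, rfl⟩; exact ⟨_, rfl⟩, fun p => ⟨fun s hs t ht u hu => ?_⟩⟩
  · simp [floorIn_eq_self hK.1.zero_mem]
  · simp [floorIn_eq_self hK.1.one_mem]
  simp only [mem_preimage, mem_singleton_iff, Path.coe_mk_mk, comp_apply] at hs ht ⊢
  have hdis := LoopGaps.disjoint_of_minimal hK (hmem s) (hmem t) (hs.trans ht.symm)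
  rcases (monotone_floorIn K hu.1).eq_or_lt with h₁ | h₁
  · rwa [← h₁]
  rcases (monotone_floorIn K hu.2).eq_or_lt with h₂ | h₂
  · rwa [h₂]
  exact absurd (hmem u) (disjoint_left.1 hdis ⟨h₁, h₂⟩)

end LoopErasure

section Reparametrization

variable {E : Type*} [MetricSpace E] {α : I → E} {q s t u : I}

/-- The largest distance from `α q` reached by `α` on `[q, max q t]`, written as a supremum over
the fixed compact set `Ici q` through the clamp `x ↦ min x (max q t)`. -/
noncomputable def excursion (α : I → E) (q t : I) : ℝ :=
  sSup ((fun x => dist (α (min x (max q t))) (α q)) '' Ici q)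

lemma excursion_nonneg : 0 ≤ excursion α q t :=
  Real.sSup_nonneg (by rintro _ ⟨x, -, rfl⟩; exact dist_nonneg)

lemma continuous_excursion (hα : Continuous α) (q : I) : Continuous (excursion α q) :=
  isClosed_Ici.isCompact.continuous_sSup (by fun_prop)

lemma dist_le_excursion (hα : Continuous α) (hqy : q ≤ u) (hut : u ≤ max q t) :
    dist (α u) (α q) ≤ excursion α q t := by
  refine le_csSup (isClosed_Ici.isCompact.image (by fun_prop)).bddAbove ⟨u, hqy, ?_⟩
  dsimp only
  rw [min_eq_left hut]

lemma excursion_eq_zero (htq : t ≤ q) : excursion α q t = 0 := by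
  refine (csSup_le (nonempty_Ici.image _) ?_).antisymm excursion_nonneg
  rintro _ ⟨x, hx, rfl⟩
  dsimp only
  rw [max_eq_left htq, min_eq_right hx, dist_self]

lemma monotone_excursion (hα : Continuous α) : Monotone (excursion α q) := fun s t hst => by
  refine csSup_le (nonempty_Ici.image _) ?_
  rintro _ ⟨x, hx, rfl⟩
  exact dist_le_excursion hα (le_min hx (le_max_left _ _))
    ((min_le_right _ _).trans (max_le_max le_rfl hst))

lemma excursion_eq_of_forall_eq (hst : s ≤ t) (hconst : ∀ u ∈ Icc s t, α u = α s) :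
    excursion α q s = excursion α q t := by
  refine congrArg sSup (image_congr fun x _ => ?_)
  by_cases h : min x (max q s) = min x (max q t)
  · rw [h]
  -- otherwise both clamped times lie in `[s, t]`
  have : s ≤ min x (max q s) ∧ min x (max q s) ≤ t ∧ s ≤ min x (max q t) ∧
      min x (max q t) ≤ t := by
    simp only [min_def, max_def] at *
    split_ifs at * <;> refine ⟨?_, ?_, ?_, ?_⟩ <;> order
  rw [hconst _ ⟨this.1, this.2.1⟩, hconst _ ⟨this.2.2.1, this.2.2.2⟩]

noncomputable def progress (α : I → E) (d : ℕ → I) (t : I) : ℝ :=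
  ∑' n, (1 / 2 : ℝ) ^ n * min (excursion α (d n) t) 1

variable {d : ℕ → I}

lemma progress_term_le (n : ℕ) (t : I) :
    (1 / 2 : ℝ) ^ n * min (excursion α (d n) t) 1 ≤ (1 / 2) ^ n :=
  mul_le_of_le_one_right (by positivity) (min_le_right _ _)

lemma summable_progress (t : I) :
    Summable fun n => (1 / 2 : ℝ) ^ n * min (excursion α (d n) t) 1 :=
  summable_geometric_two.of_nonneg_of_le
    (fun _ => mul_nonneg (by positivity) (le_min excursion_nonneg zero_le_one))
    (progress_term_le · t)

lemma continuous_progress (hα : Continuous α) : Continuous (progress α d) :=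
  continuous_tsum (fun _ => continuous_const.mul ((continuous_excursion hα _).min continuous_const))
    summable_geometric_two fun n t => by
      rw [Real.norm_of_nonneg (mul_nonneg (by positivity) (le_min excursion_nonneg zero_le_one))]
      exact progress_term_le n t

lemma monotone_progress (hα : Continuous α) : Monotone (progress α d) := fun _ _ hst =>
  (summable_progress _).tsum_le_tsum
    (fun _ => by gcongr; exact monotone_excursion hα hst) (summable_progress _)

lemma progress_lt (hα : Continuous α) (hd : DenseRange d) (hu : u ∈ Icc s t) (hne : α u ≠ α s) :
    progress α d s < progress α d t := by
  have hsu : s < u := hu.1.lt_of_ne fun h => hne (h ▸ rfl)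
  obtain ⟨v, hv, hvu⟩ : ∃ v ∈ Ioo s u, α v ≠ α u := by
    by_contra! H
    have : Icc s u ⊆ α ⁻¹' {α u} :=
      closure_Ioo hsu.ne ▸ closure_minimal H (isClosed_singleton.preimage hα)
    exact hne (this ⟨le_rfl, hsu.le⟩).symm
  obtain ⟨n, hn, hnu⟩ := hd.exists_mem_open (isOpen_Ioo.inter (isOpen_ne_fun hα continuous_const))
    ⟨v, hv, hvu⟩
  refine (summable_progress s).tsum_lt_tsum (i := n)
    (fun _ => by gcongr; exact monotone_excursion hα (hu.1.trans hu.2)) ?_ (summable_progress t)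
  rw [excursion_eq_zero hn.1.le, min_eq_left zero_le_one, mul_zero]
  have := dist_le_excursion (t := t) hα hn.2.le (hu.2.trans (le_max_right _ _))
  exact mul_pos (by positivity) (lt_min ((dist_pos.2 hnu.symm).trans_le this) one_pos)

lemma progress_eq_iff (hα : Continuous α) (hd : DenseRange d)
    (hfib : ∀ p, (α ⁻¹' {p}).OrdConnected) (s t : I) :
    progress α d s = progress α d t ↔ α s = α t := by
  wlog hst : s ≤ t generalizing s t
  · exact eq_comm.trans ((this t s (le_of_not_ge hst)).trans eq_comm)
  refine ⟨fun h => by_contra fun hne => (progress_lt hα hd ⟨hst, le_rfl⟩ (Ne.symm hne)).ne h,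
    fun h => tsum_congr fun n => ?_⟩
  rw [excursion_eq_of_forall_eq (α := α) hst fun u hu => (hfib (α s)).out rfl h.symm hu]

theorem Path.exists_injective_of_fibers {X : Type*} [TopologicalSpace X] {x y : X}
    (δ : Path x y) (hxy : x ≠ y) (p : I → ℝ) (hp : Continuous p) (hmono : Monotone p)
    (hfib : ∀ s t, p s = p t ↔ δ s = δ t) :
    ∃ δ' : Path x y, Injective δ' ∧ range δ' ⊆ range δ := by
  have hc : 0 < p 1 - p 0 :=
    sub_pos.2 ((hmono bot_le).lt_of_ne fun h => hxy (by simpa using (hfib 0 1).1 h))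
  let q : C(I, I) := ⟨fun t => ⟨(p t - p 0) / (p 1 - p 0),
    div_nonneg (sub_nonneg.2 (hmono bot_le)) hc.le,
    (div_le_one hc).2 (sub_le_sub_right (hmono le_top) _)⟩, by fun_prop⟩
  have hq : ∀ s t, q s = q t ↔ δ s = δ t := fun s t => by
    rw [← hfib, Subtype.ext_iff]
    simp [q, div_left_inj' hc.ne']
  have hq0 : q 0 = 0 := Subtype.ext (by simp [q])
  have hq1 : q 1 = 1 := Subtype.ext (by simp [q, div_self hc.ne'])
  have hsurj : Surjective q := fun u =>
    intermediate_value_univ 0 1 q.continuous (by rw [hq0, hq1]; exact ⟨bot_le, le_top⟩)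
  have hquot := q.continuous.isClosedMap.isQuotientMap q.continuous hsurj
  have hfac : FactorsThrough δ q := fun s t h => (hq s t).1 h
  let β := hquot.lift δ.toContinuousMap hfac
  have hβ : ∀ t, β (q t) = δ t := DFunLike.congr_fun (hquot.lift_comp δ.toContinuousMap hfac)
  refine ⟨⟨β, by rw [← hq0]; exact (hβ 0).trans δ.source,
    by rw [← hq1]; exact (hβ 1).trans δ.target⟩, fun u v huv => ?_, ?_⟩
  · obtain ⟨s, rfl⟩ := hsurj u
    obtain ⟨t, rfl⟩ := hsurj v
    exact (hq s t).2 (by simpa [hβ] using huv)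
  · rintro _ ⟨u, rfl⟩
    obtain ⟨s, rfl⟩ := hsurj u
    exact ⟨s, (hβ s).symm⟩

theorem Path.exists_injective {x y : E} (γ : Path x y) (hxy : x ≠ y) :
    ∃ δ : Path x y, Injective δ ∧ range δ ⊆ range γ := by
  obtain ⟨α, hαγ, hfib⟩ := γ.exists_ordConnected_fibers
  obtain ⟨d, hd⟩ := TopologicalSpace.exists_dense_seq I
  obtain ⟨δ, hinj, hδα⟩ := α.exists_injective_of_fibers hxy (progress α d)
    (continuous_progress α.continuous) (monotone_progress α.continuous)
    (progress_eq_iff α.continuous hd hfib)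
  exact ⟨δ, hinj, hδα.trans hαγ⟩

end Reparametrization

section PathComponents

variable {E : Type*} [NormedAddCommGroup E] [NormedSpace ℝ E] {S W : Set E} {p u : E}

lemma pathComponentIn_diff_mem_nhdsWithin (hS : Convex ℝ S) (hW : IsClosed W) (hu : u ∈ S \ W) :
    pathComponentIn (S \ W) u ∈ 𝓝[S] u := by
  obtain ⟨ε, hε, hball⟩ := Metric.isOpen_iff.1 hW.isOpen_compl u hu.2
  have hconv : Convex ℝ (Metric.ball u ε ∩ S) := (convex_ball u ε).inter hS
  refine mem_nhdsWithin.2 ⟨_, Metric.isOpen_ball, Metric.mem_ball_self hε, ?_⟩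
  exact (hconv.isPathConnected ⟨u, Metric.mem_ball_self hε, hu.1⟩).subset_pathComponentIn
    ⟨Metric.mem_ball_self hε, hu.1⟩ fun v hv => ⟨hv.2, hball hv.1⟩

lemma pathComponentIn_mem_nhdsWithin (hS : Convex ℝ S) (hW : IsClosed W)
    (hu : u ∈ pathComponentIn (S \ W) p) : pathComponentIn (S \ W) p ∈ 𝓝[S] u :=
  pathComponentIn_congr hu ▸ pathComponentIn_diff_mem_nhdsWithin hS hW (pathComponentIn_subset hu)

lemma mem_pathComponentIn_of_mem_closure (hS : Convex ℝ S) (hW : IsClosed W) (hu : u ∈ S \ W)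
    (hcl : u ∈ closure (pathComponentIn (S \ W) p)) : u ∈ pathComponentIn (S \ W) p := by
  obtain ⟨V, hV, hVS⟩ := mem_nhdsWithin_iff_exists_mem_nhds_inter.1
    (pathComponentIn_diff_mem_nhdsWithin hS hW hu)
  obtain ⟨v, hvV, hv⟩ := mem_closure_iff_nhds.1 hcl V hV
  have hvu : JoinedIn (S \ W) u v := hVS ⟨hvV, (pathComponentIn_subset hv).1⟩
  exact (hv : JoinedIn (S \ W) p v).trans hvu.symm

end PathComponents

theorem Path.exists_joinedIn_diff {X : Type*} [TopologicalSpace X] {x y : X} (γ : Path x y)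
    {S C : Set X} (hγS : range γ ⊆ S) (hC : ∀ u ∈ C, C ∈ 𝓝[S] u) (hx : x ∉ C)
    (hγC : (range γ ∩ C).Nonempty) : ∃ w ∈ closure C \ C, JoinedIn (range γ \ C) x w := by
  have hT : IsOpen (γ ⁻¹' C) := isOpen_iff_mem_nhds.2 fun t ht =>
    (tendsto_nhdsWithin_iff.2 ⟨γ.continuous.tendsto t,
      Eventually.of_forall fun s => hγS (mem_range_self s)⟩) (hC _ ht)
  obtain ⟨_, ⟨t₀, rfl⟩, ht₀⟩ := hγC
  set a := sInf (γ ⁻¹' C)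
  -- `a` is the first time `γ` touches `closure C`, and `γ a ∉ C` since `γ ⁻¹' C` is open
  have ha : a ∉ γ ⁻¹' C := fun ha => by
    have ha0 : (0 : I) < a := bot_lt_iff_ne_bot.2 fun h => hx <| by
      have : γ ⊥ ∈ C := h ▸ ha
      rwa [show (⊥ : I) = 0 from rfl, γ.source] at this
    have : (𝓝[<] a).NeBot := nhdsLT_neBot_of_exists_lt ⟨0, ha0⟩
    obtain ⟨s, hs, hsa⟩ := Filter.nonempty_of_mem
      (inter_mem (mem_nhdsWithin_of_mem_nhds (hT.mem_nhds ha)) (self_mem_nhdsWithin (s := Iio a)))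
    exact (sInf_le hs).not_gt hsa
  refine ⟨γ a, ⟨γ.continuous.closure_preimage_subset C (sInf_mem_closure ⟨t₀, ht₀⟩), ha⟩,
    ⟨(γ.subpath 0 a).cast γ.source.symm rfl, fun s => ?_⟩⟩
  have hs : (γ.subpath 0 a) s ∈ γ '' Icc 0 a :=
    γ.range_subpath_of_le 0 a bot_le ▸ mem_range_self s
  obtain ⟨t, ht, hts⟩ := hs
  rw [Path.cast_coe, ← hts]
  refine ⟨mem_range_self t, fun htC => ?_⟩
  rcases ht.2.eq_or_lt with rfl | hta
  · exact ha htC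
  · exact (sInf_le (show t ∈ γ ⁻¹' C from htC)).not_gt hta

lemma IsPathComponentOf.eq_pathComponentIn {C U : Set (ℝ × ℝ)} (h : IsPathComponentOf C U)
    {x : ℝ × ℝ} (hx : x ∈ C) : C = pathComponentIn U x := by
  obtain ⟨p, -, rfl⟩ := h
  exact (pathComponentIn_congr hx).symm

lemma convex_upperHalf : Convex ℝ UpperHalf := fun _ hp _ hq _ _ ha hb _ =>
  add_nonneg (mul_nonneg ha hp) (mul_nonneg hb hq)

theorem joinedIn_diff_of_disjoint {X Y Z C₁ C₂ : Set (ℝ × ℝ)} (hX : IsClosed X) (hY : IsClosed Y)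
    (hZ : Z ⊆ UpperHalf) (hZY : Z ∩ Y = ∅ ∨ IsPathConnected (Z ∩ Y))
    (hC₁ : IsPathComponentOf C₁ (UpperHalf \ (X ∪ Y)))
    (hC₂ : IsPathComponentOf C₂ (UpperHalf \ (X ∪ Y))) (hne : C₁ ≠ C₂) {z z' : ℝ × ℝ}
    (hz : z ∈ C₁) (hz' : z' ∈ C₁) (γ : Path z z') (hγZ : range γ ⊆ Z)
    (hγX : Disjoint (range γ) X) : JoinedIn (Z \ C₂) z z' := by
  have hW : IsClosed (X ∪ Y) := hX.union hY
  have hnot : ∀ {w}, w ∈ C₁ → w ∉ C₂ := fun hw hw₂ =>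
    hne ((hC₁.eq_pathComponentIn hw).trans (hC₂.eq_pathComponentIn hw₂).symm)
  by_cases hmeet : (range γ ∩ C₂).Nonempty
  swap
  · exact ⟨γ, fun t => ⟨hγZ (mem_range_self t), fun h => hmeet ⟨_, mem_range_self t, h⟩⟩⟩
  obtain ⟨p, -, rfl⟩ := hC₂
  set C₂ := pathComponentIn (UpperHalf \ (X ∪ Y)) p
  have hopen : ∀ u ∈ C₂, C₂ ∈ 𝓝[UpperHalf] u :=
    fun _ => pathComponentIn_mem_nhdsWithin convex_upperHalf hW
  have hfrontier : ∀ w ∈ closure C₂ \ C₂, w ∈ range γ → w ∈ Z ∩ Y := fun w hw hwγ =>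
    ⟨hγZ hwγ, by_contra fun hwY => hw.2 (mem_pathComponentIn_of_mem_closure convex_upperHalf hW
      ⟨hZ (hγZ hwγ), fun hXY => hXY.elim (disjoint_left.1 hγX hwγ) hwY⟩ hw.1)⟩
  obtain ⟨w, hw, hzw⟩ := γ.exists_joinedIn_diff (hγZ.trans hZ) hopen (hnot hz) hmeet
  obtain ⟨w', hw', hz'w'⟩ := γ.symm.exists_joinedIn_diff (γ.symm_range ▸ hγZ.trans hZ) hopen
    (hnot hz') (γ.symm_range ▸ hmeet)
  rw [γ.symm_range] at hz'w'
  have hwY := hfrontier w hw hzw.mem.2.1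
  have hw'Y := hfrontier w' hw' hz'w'.mem.2.1
  have hww' : JoinedIn (Z ∩ Y) w w' :=
    (hZY.resolve_left (nonempty_iff_ne_empty.1 ⟨w, hwY⟩)).joinedIn w hwY w' hw'Y
  have hγ : range γ \ C₂ ⊆ Z \ C₂ := sdiff_subset_sdiff_left hγZ
  have hZY : Z ∩ Y ⊆ Z \ C₂ := fun v hv =>
    ⟨hv.1, fun hvC => (pathComponentIn_subset hvC).2 (Or.inr hv.2)⟩
  exact (hzw.mono hγ).trans ((hww'.mono hZY).trans (hz'w'.symm.mono hγ))

lemma IsArcBetween.exists_path {A : Set (ℝ × ℝ)} {x y : ℝ × ℝ} (hA : IsArcBetween A x y) :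
    ∃ γ : Path x y, range γ = A := by
  obtain ⟨φ, hφ, -, hφ0, hφ1, rfl⟩ := hA
  refine ⟨⟨⟨fun t => φ t, hφ.comp_continuous continuous_subtype_val Subtype.prop⟩, hφ0, hφ1⟩, ?_⟩
  ext p
  simp [image]

lemma Path.isArcBetween_range {x y : ℝ × ℝ} (δ : Path x y) (hδ : Injective δ) :
    IsArcBetween (range δ) x y := by
  refine ⟨δ.extend, δ.continuous_extend.continuousOn, fun s hs t ht hst => ?_, δ.extend_zero,
    δ.extend_one, (δ.image_extend_of_subset subset_rfl).symm⟩
  rw [δ.extend_apply hs, δ.extend_apply ht] at hst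
  exact congrArg Subtype.val (hδ hst)

lemma JoinedIn.exists_isArcBetween {S : Set (ℝ × ℝ)} {x y : ℝ × ℝ} (h : JoinedIn S x y)
    (hxy : x ≠ y) : ∃ A ⊆ S, IsArcBetween A x y := by
  obtain ⟨δ, hinj, hδ⟩ := h.somePath.exists_injective hxy
  exact ⟨range δ, hδ.trans (range_subset_iff.2 h.somePath_mem), δ.isArcBetween_range hinj⟩

theorem GroundedFamily.inter_nonempty_of_isArcBetween {F : Set (Set (ℝ × ℝ))}
    (hF : GroundedFamily F) {X Y Z : Set (ℝ × ℝ)} (hX : X ∈ F) (hY : Y ∈ F) (hZ : Z ∈ F)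
    {C₁ C₂ : Set (ℝ × ℝ)} (hC₁ : IsPathComponentOf C₁ (UpperHalf \ (X ∪ Y)))
    (hC₂ : IsPathComponentOf C₂ (UpperHalf \ (X ∪ Y))) (hne : C₁ ≠ C₂) {z z' : ℝ × ℝ}
    (hz : z ∈ C₁) (hz' : z' ∈ C₁) (hzz : z ≠ z')
    (harc : ∀ A ⊆ Z, IsArcBetween A z z' → (A ∩ C₂).Nonempty) {A : Set (ℝ × ℝ)} (hAZ : A ⊆ Z)
    (hA : IsArcBetween A z z') : (A ∩ X).Nonempty := by
  by_contra hAX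
  obtain ⟨γ, rfl⟩ := hA.exists_path
  have hZY : Z ∩ Y = ∅ ∨ IsPathConnected (Z ∩ Y) := by
    simpa using hF.2.2.1 {Z, Y} (pair_subset hZ hY) (insert_nonempty _ _)
  obtain ⟨A', hA'Z, hA'⟩ := (joinedIn_diff_of_disjoint (hF.2.1 X hX).2.1.isClosed
    (hF.2.1 Y hY).2.1.isClosed (hF.2.1 Z hZ).1 hZY hC₁ hC₂ hne hz hz' γ hAZ
    (disjoint_iff_inter_eq_empty.2 (not_nonempty_iff_eq_empty.1 hAX))).exists_isArcBetween hzz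
  obtain ⟨w, hwA', hwC₂⟩ := harc A' (hA'Z.trans sdiff_subset) hA'
  exact (hA'Z hwA').2 hwC₂

theorem surround_lemma_general
    (F : Set (Set (ℝ × ℝ))) (hF : GroundedFamily F)
    (X Y Z : Set (ℝ × ℝ)) (hX : X ∈ F) (hY : Y ∈ F) (hZ : Z ∈ F)
    (C₁ C₂ : Set (ℝ × ℝ))
    (hC₁ : IsPathComponentOf C₁ (UpperHalf \ (X ∪ Y)))
    (hC₂ : IsPathComponentOf C₂ (UpperHalf \ (X ∪ Y)))
    (hCne : C₁ ≠ C₂)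
    (z z' : ℝ × ℝ) (hz : z ∈ Z ∩ C₁) (hz' : z' ∈ Z ∩ C₁) (hzz : z ≠ z')
    (harc : ∀ A ⊆ Z, IsArcBetween A z z' → (A ∩ C₂).Nonempty) :
    ∀ A ⊆ Z, IsArcBetween A z z' → (A ∩ X).Nonempty ∧ (A ∩ Y).Nonempty := by
  intro A hAZ hA
  have hC₁' : IsPathComponentOf C₁ (UpperHalf \ (Y ∪ X)) := union_comm X Y ▸ hC₁
  have hC₂' : IsPathComponentOf C₂ (UpperHalf \ (Y ∪ X)) := union_comm X Y ▸ hC₂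
  exact ⟨hF.inter_nonempty_of_isArcBetween hX hY hZ hC₁ hC₂ hCne hz.2 hz'.2 hzz harc hAZ hA,
    hF.inter_nonempty_of_isArcBetween hY hX hZ hC₁' hC₂' hCne hz.2 hz'.2 hzz harc hAZ hA⟩

/-- If every arc between `z, z' ∈ Z ∩ C₁` within `Z` meets another component `C₂` of
`H \ (X ∪ Y)`, then every such arc meets both `X` and `Y`. -/
theorem surround_lemma
    (F : Set (Set (ℝ × ℝ))) (hF : GroundedFamily F)
    (X Y Z : Set (ℝ × ℝ)) (hX : X ∈ F) (hY : Y ∈ F) (hZ : Z ∈ F)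
    (hXY : (X ∩ Y).Nonempty)
    (C₁ C₂ : Set (ℝ × ℝ))
    (hC₁ : IsPathComponentOf C₁ (UpperHalf \ (X ∪ Y)))
    (hC₂ : IsPathComponentOf C₂ (UpperHalf \ (X ∪ Y)))
    (hCne : C₁ ≠ C₂)
    (z z' : ℝ × ℝ) (hz : z ∈ Z ∩ C₁) (hz' : z' ∈ Z ∩ C₁) (hzz : z ≠ z')
    (harc : ∀ A ⊆ Z, IsArcBetween A z z' → (A ∩ C₂).Nonempty) :
    ∀ A ⊆ Z, IsArcBetween A z z' → (A ∩ X).Nonempty ∧ (A ∩ Y).Nonempty :=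
  surround_lemma_general F hF X Y Z hX hY hZ C₁ C₂ hC₁ hC₂ hCne z z' hz hz' hzz harc
end

section
/- Let x₁ < x₂ < y₁ < y₂ be real numbers, and consider the points (x₁,0), (x₂,0), (y₁,0), (y₂,0) on the baseline. Then every arc contained in the closed upper halfplane H between (x₁,0) and (y₁,0) intersects every arc contained in H between (x₂,0) and (y₂,0). -/
open Set

/-!
Suppose the arcs are disjoint and parametrise them by paths `γ` and `δ`. Then
`F(s, t) = δ t - γ s` never vanishes on the square, so it has a continuous logarithm `L`.
On the sides `s = 0, 1` the values of `F` lie in the closed upper half-plane, on the sides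
`t = 0, 1` in the closed lower one, and at the corners they are the reals `x₂ - x₁ > 0`,
`x₂ - y₁ < 0`, `y₂ - x₁ > 0`, `y₂ - y₁ > 0`. Hence `im L` changes by `-π` along `t = 0` and
along `s = 1`, but by `0` along `s = 0` and along `t = 1`: the two routes from `(0, 0)` to
`(1, 1)` disagree.
-/

open Complex ComplexConjugate

namespace Complex

theorem continuousOn_arg_of_im_nonneg : ContinuousOn arg {z : ℂ | 0 ≤ z.im ∧ z ≠ 0} := by
  rintro z ⟨-, hz0⟩
  by_cases hslit : z ∈ slitPlane
  · exact (continuousAt_arg hslit).continuousWithinAt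
  simp only [mem_slitPlane_iff, not_or, not_lt, not_not] at hslit
  obtain ⟨hre_nonpos, him⟩ := hslit
  have hre : z.re < 0 := hre_nonpos.lt_of_ne fun h => hz0 (Complex.ext h him)
  have hlim := tendsto_arg_nhdsWithin_im_nonneg_of_re_neg_of_im_zero hre him
  rw [← arg_eq_pi_iff.2 ⟨hre, him⟩] at hlim
  exact hlim.mono_left (nhdsWithin_mono _ fun w hw => hw.1)

theorem im_sub_im_eq_arg_sub_arg_of_exp_im_nonneg {X : Type*} [TopologicalSpace X]
    [PreconnectedSpace X] {L : X → ℂ} (hL : Continuous L) (him : ∀ x, 0 ≤ (exp (L x)).im)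
    (a b : X) : (L b).im - (L a).im = arg (exp (L b)) - arg (exp (L a)) := by
  have hcont : Continuous fun x => (L x).im - arg (exp (L x)) :=
    (continuous_im.comp hL).sub <| continuousOn_arg_of_im_nonneg.comp_continuous
      (continuous_exp.comp hL) fun x => ⟨him x, exp_ne_zero _⟩
  have hmaps : MapsTo (fun x => (L x).im - arg (exp (L x))) univ
      (AddSubgroup.zmultiples (2 * Real.pi)) :=
    fun x _ => ⟨toIocDiv Real.two_pi_pos (-Real.pi) (L x).im, by
      simp only [arg_exp, self_sub_toIocMod]⟩
  have hdisc : IsDiscrete (AddSubgroup.zmultiples (2 * Real.pi) : Set ℝ) :=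
    isDiscrete_iff_discreteTopology.2
      (inferInstanceAs (DiscreteTopology (AddSubgroup.zmultiples (2 * Real.pi))))
  have := isPreconnected_univ.constant_of_mapsTo hdisc hcont.continuousOn hmaps
    (mem_univ b) (mem_univ a)
  linarith

theorem im_sub_im_eq_arg_sub_arg_of_exp_im_nonpos {X : Type*} [TopologicalSpace X]
    [PreconnectedSpace X] {L : X → ℂ} (hL : Continuous L) (him : ∀ x, (exp (L x)).im ≤ 0)
    (a b : X) : (L b).im - (L a).im = arg (conj (exp (L a))) - arg (conj (exp (L b))) := by
  have h := im_sub_im_eq_arg_sub_arg_of_exp_im_nonneg (L := fun x => conj (L x))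
    (continuous_conj.comp hL) (fun x => by rw [exp_conj, conj_im]; linarith [him x]) a b
  simp only [exp_conj, conj_im] at h
  linarith

theorem exists_continuous_exp_eq {X : Type*} [TopologicalSpace X] [SimplyConnectedSpace X]
    [LocallyPathConnectedSpace X] (f : C(X, ℂ)) (hf : ∀ x, f x ≠ 0) :
    ∃ L : C(X, ℂ), ∀ x, exp (L x) = f x := by
  obtain ⟨x₀⟩ := (inferInstance : Nonempty X)
  obtain ⟨L, ⟨-, hL⟩, -⟩ := isCoveringMapOn_exp.existsUnique_continuousMap_lifts f
    (exp_log (hf x₀)) hf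
  exact ⟨L, congrFun hL⟩

end Complex

theorem exists_apply_eq_apply_of_interleaved {x₁ x₂ y₁ y₂ : ℝ} (h₁ : x₁ < x₂) (h₂ : x₂ < y₁)
    (h₃ : y₁ < y₂) (γ : Path (x₁ : ℂ) y₁) (δ : Path (x₂ : ℂ) y₂) (hγ : ∀ s, 0 ≤ (γ s).im)
    (hδ : ∀ t, 0 ≤ (δ t).im) : ∃ s t, γ s = δ t := by
  by_contra! hne
  have hγ' : ∀ s, 0 ≤ (γ.extend s).im := fun _ => hγ _
  have hδ' : ∀ t, 0 ≤ (δ.extend t).im := fun _ => hδ _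
  -- `F` is defined on all of the simply connected `ℝ × ℝ`, where a continuous logarithm exists;
  -- `Path.extend` only takes values on the path.
  let F : C(ℝ × ℝ, ℂ) := ⟨fun p => δ.extend p.2 - γ.extend p.1, by fun_prop⟩
  have hF : ∀ p, F p ≠ 0 := fun _ => sub_ne_zero.2 (hne _ _).symm
  obtain ⟨L, hL⟩ := exists_continuous_exp_eq F hF
  have bottom := im_sub_im_eq_arg_sub_arg_of_exp_im_nonpos (L := fun s => L (s, 0))
    (by fun_prop) (fun s => by simpa [hL, F] using hγ' s) 0 1
  have top := im_sub_im_eq_arg_sub_arg_of_exp_im_nonpos (L := fun s => L (s, 1))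
    (by fun_prop) (fun s => by simpa [hL, F] using hγ' s) 0 1
  have left := im_sub_im_eq_arg_sub_arg_of_exp_im_nonneg (L := fun t => L (0, t))
    (by fun_prop) (fun t => by simpa [hL, F] using hδ' t) 0 1
  have right := im_sub_im_eq_arg_sub_arg_of_exp_im_nonneg (L := fun t => L (1, t))
    (by fun_prop) (fun t => by simpa [hL, F] using hδ' t) 0 1
  simp only [hL, F, ContinuousMap.coe_mk, Path.extend_zero, Path.extend_one, ← ofReal_sub,
    conj_ofReal] at bottom top left right
  rw [arg_ofReal_of_nonneg (by linarith), arg_ofReal_of_neg (by linarith)] at bottom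
  rw [arg_ofReal_of_nonneg (by linarith), arg_ofReal_of_nonneg (by linarith)] at top left
  rw [arg_ofReal_of_nonneg (by linarith), arg_ofReal_of_neg (by linarith)] at right
  linarith [Real.pi_pos]

theorem IsArcBetween.exists_path_ofReal {A : Set (ℝ × ℝ)} {x y : ℝ}
    (hA : IsArcBetween A (x, 0) (y, 0)) :
    ∃ γ : Path (x : ℂ) y, ∀ s, equivRealProd (γ s) ∈ A := by
  obtain ⟨φ, hφc, -, hφ0, hφ1, rfl⟩ := hA
  refine ⟨⟨⟨fun s => equivRealProd.symm (φ s), ?_⟩, ?_, ?_⟩, fun s => ?_⟩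
  · exact equivRealProdCLM.symm.continuous.comp
      (hφc.comp_continuous continuous_subtype_val Subtype.prop)
  · simp [hφ0]
  · simp [hφ1]
  · simpa using mem_image_of_mem φ s.2

/-- Arcs in the upper halfplane with interleaved endpoints on the baseline intersect. -/
theorem interleaved_arcs_intersect
    (x₁ x₂ y₁ y₂ : ℝ) (h₁ : x₁ < x₂) (h₂ : x₂ < y₁) (h₃ : y₁ < y₂)
    (A B : Set (ℝ × ℝ))
    (hA : IsArcBetween A (x₁, 0) (y₁, 0)) (hAH : A ⊆ UpperHalf)
    (hB : IsArcBetween B (x₂, 0) (y₂, 0)) (hBH : B ⊆ UpperHalf) :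
    (A ∩ B).Nonempty := by
  obtain ⟨γ, hγA⟩ := hA.exists_path_ofReal
  obtain ⟨δ, hδB⟩ := hB.exists_path_ofReal
  obtain ⟨s, t, hst⟩ := exists_apply_eq_apply_of_interleaved h₁ h₂ h₃ γ δ
    (fun s => hAH (hγA s)) (fun t => hBH (hδB t))
  exact ⟨_, hγA s, hst ▸ hδB t⟩
end
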